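/- arXiv:math-ph/0007022 — 5 statements merged into one kernel-verified Lean document; each statement's English description precedes it below -/
import Mathlib

section
/- Let T be a measure-preserving transformation of a probability space (Ω, μ) and q : Ω → ℝ measurable taking values in the set {γ + n·e : n ∈ ℤ} for fixed reals γ and e > 0. Suppose q − ρ = 𝓔∘T − 𝓔 for some measurable 𝓔 : Ω → ℝ and constant ρ. Then φ(ω) := 𝓔(ω)/e mod 1 satisfies φ(Tω) = φ(ω) + (γ − ρ)/e in ℝ/ℤ. In particular, if ρ − γ is not an integer multiple of e, then the system (Ω, μ, T) admits a cyclic factor with nonzero rotation number α/e where α = (ρ − γ) mod e, and hence μ is not mixing under T. -/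
open MeasureTheory Filter

lemma aux_a_one {a : ℝ} (h0 : 0 ≤ a) (h : (1:ℝ) = a ^ 2 + 0 ^ 2) : a = 1 := by nlinarith

lemma aux_cos_one {a c s : ℝ} (ha : a = 1) (h1 : a = a * c - 0 * s) : c = 1 := by
  rw [ha] at h1; linarith

lemma int_coe_addCircle_one (n : ℤ) : ((n : ℝ) : AddCircle (1 : ℝ)) = 0 := by
  rw [AddCircle.coe_eq_zero_iff]
  exact ⟨n, by simp⟩

set_option maxHeartbeats 2000000 in
/-- Theorem 2 of the paper: charges constrained to the coset γ + eℤ with q − ρ a coboundary.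
Then 𝓔/e mod 1 is a cyclic factor with rotation by (γ − ρ)/e, and if ρ − γ ∉ eℤ the
rotation is nontrivial and the system is not mixing. -/
theorem lattice_coset_charge_cyclic_factor {Ω : Type*} [MeasurableSpace Ω]
    (μ : Measure Ω) [IsProbabilityMeasure μ]
    (T : Ω → Ω) (hT : MeasurePreserving T μ μ)
    (q : Ω → ℝ) (hq : Measurable q)
    (γ e : ℝ) (he : 0 < e)
    (hval : ∀ ω, ∃ n : ℤ, q ω = γ + n * e)
    (ρ : ℝ) (𝓔 : Ω → ℝ) (h𝓔 : Measurable 𝓔)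
    (hcob : ∀ᵐ ω ∂μ, q ω - ρ = 𝓔 (T ω) - 𝓔 ω) :
    (∀ᵐ ω ∂μ, ((𝓔 (T ω) / e : ℝ) : AddCircle (1 : ℝ))
        = ((𝓔 ω / e : ℝ) : AddCircle (1 : ℝ)) + (((γ - ρ) / e : ℝ) : AddCircle (1 : ℝ))) ∧
    ((¬ ∃ n : ℤ, ρ - γ = n * e) →
      ((((γ - ρ) / e : ℝ) : AddCircle (1 : ℝ)) ≠ 0 ∧
      ¬ ∀ (F G : Ω → ℝ), Measurable F → Measurable G →
          (∃ C : ℝ, ∀ ω, |F ω| ≤ C) → (∃ C : ℝ, ∀ ω, |G ω| ≤ C) →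
          Tendsto (fun n : ℕ => ∫ ω, F ω * G (T^[n] ω) ∂μ) atTop
            (nhds ((∫ ω, F ω ∂μ) * (∫ ω, G ω ∂μ))))) := by
  have hene : e ≠ 0 := ne_of_gt he
  -- one-step relation a.e. at each iterate
  have hgood : ∀ᵐ ω ∂μ, ∀ k : ℕ, ∃ m : ℤ,
      𝓔 (T^[k+1] ω) = 𝓔 (T^[k] ω) + (γ - ρ) + m * e := by
    rw [ae_all_iff]
    intro k
    have h1 : ∀ᵐ ω ∂μ, q (T^[k] ω) - ρ = 𝓔 (T (T^[k] ω)) - 𝓔 (T^[k] ω) :=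
      (hT.iterate k).quasiMeasurePreserving.ae hcob
    filter_upwards [h1] with ω hω
    obtain ⟨n, hn⟩ := hval (T^[k] ω)
    refine ⟨n, ?_⟩
    rw [Function.iterate_succ_apply']
    rw [hn] at hω
    linarith
  have hiter : ∀ᵐ ω ∂μ, ∀ n : ℕ, ∃ m : ℤ,
      𝓔 (T^[n] ω) = 𝓔 ω + n * (γ - ρ) + m * e := by
    filter_upwards [hgood] with ω hω
    intro n
    induction n with
    | zero => exact ⟨0, by simp⟩
    | succ n ih =>
      obtain ⟨m, hm⟩ := ih
      obtain ⟨m', hm'⟩ := hω n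
      refine ⟨m + m', ?_⟩
      rw [hm', hm]
      push_cast
      ring
  constructor
  · -- cyclic factor relation
    filter_upwards [hcob] with ω hω
    obtain ⟨n, hn⟩ := hval ω
    have h1 : 𝓔 (T ω) / e = 𝓔 ω / e + (γ - ρ) / e + (n : ℝ) := by
      rw [hn] at hω
      field_simp
      linarith
    rw [h1]
    push_cast
    rw [AddCircle.coe_add, int_coe_addCircle_one, add_zero, AddCircle.coe_add]
  · intro hne
    have hnz : (((γ - ρ) / e : ℝ) : AddCircle (1 : ℝ)) ≠ 0 := by
      intro h0
      rw [AddCircle.coe_eq_zero_iff] at h0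
      obtain ⟨n, hn⟩ := h0
      apply hne
      refine ⟨-n, ?_⟩
      have : (n : ℝ) * 1 = (γ - ρ) / e := by simpa using hn
      push_cast
      field_simp at this
      linarith
    refine ⟨hnz, ?_⟩
    intro hmix
    set θ : ℝ := 2 * Real.pi * ((γ - ρ) / e) with hθ
    set F : Ω → ℝ := fun ω => Real.cos (2 * Real.pi * (𝓔 ω / e)) with hF
    set G : Ω → ℝ := fun ω => Real.sin (2 * Real.pi * (𝓔 ω / e)) with hG
    have hFm : Measurable F := (Real.measurable_cos).comp (by measurability)
    have hGm : Measurable G := (Real.measurable_sin).comp (by measurability)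
    have hFb : ∃ C : ℝ, ∀ ω, |F ω| ≤ C := ⟨1, fun ω => Real.abs_cos_le_one _⟩
    have hGb : ∃ C : ℝ, ∀ ω, |G ω| ≤ C := ⟨1, fun ω => Real.abs_sin_le_one _⟩
    -- pointwise identities
    have hpt : ∀ᵐ ω ∂μ, ∀ n : ℕ,
        (F ω * F (T^[n] ω) + G ω * G (T^[n] ω) = Real.cos (n * θ)) ∧
        (F ω * G (T^[n] ω) - G ω * F (T^[n] ω) = Real.sin (n * θ)) := by
      filter_upwards [hiter] with ω hω
      intro n
      obtain ⟨m, hm⟩ := hω n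
      have harg : 2 * Real.pi * (𝓔 (T^[n] ω) / e)
          = 2 * Real.pi * (𝓔 ω / e) + n * θ + m * (2 * Real.pi) := by
        rw [hm, hθ]
        field_simp
      have hFc : F (T^[n] ω) = Real.cos (2 * Real.pi * (𝓔 ω / e) + n * θ) := by
        rw [hF]; simp only []
        rw [harg, Real.cos_add_int_mul_two_pi]
      have hGc : G (T^[n] ω) = Real.sin (2 * Real.pi * (𝓔 ω / e) + n * θ) := by
        rw [hG]; simp only []
        rw [harg, Real.sin_add_int_mul_two_pi]
      constructor
      · rw [hFc, hGc, hF, hG]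
        simp only []
        have := Real.cos_sub (2 * Real.pi * (𝓔 ω / e) + n * θ) (2 * Real.pi * (𝓔 ω / e))
        simp only [add_sub_cancel_left] at this
        rw [this]; ring
      · rw [hFc, hGc, hF, hG]
        simp only []
        have := Real.sin_sub (2 * Real.pi * (𝓔 ω / e) + n * θ) (2 * Real.pi * (𝓔 ω / e))
        simp only [add_sub_cancel_left] at this
        rw [this]; ring
    -- integrability
    have hTm : Measurable T := hT.measurable
    have hint : ∀ (A B : Ω → ℝ), Measurable A → Measurable B → (∀ x, |A x| ≤ 1) →
        (∀ x, |B x| ≤ 1) → ∀ n : ℕ, Integrable (fun ω => A ω * B (T^[n] ω)) μ := by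
      intro A B hA hB hAb hBb n
      refine (integrable_const (1 : ℝ)).mono'
        ((hA.mul (hB.comp (hTm.iterate n))).aestronglyMeasurable) ?_
      filter_upwards with ω
      rw [Real.norm_eq_abs, abs_mul]
      calc |A ω| * |B (T^[n] ω)| ≤ 1 * 1 :=
            mul_le_mul (hAb ω) (hBb (T^[n] ω)) (abs_nonneg _) zero_le_one
        _ = 1 := one_mul 1
    have hFb1 : ∀ x, |F x| ≤ 1 := fun x => Real.abs_cos_le_one _
    have hGb1 : ∀ x, |G x| ≤ 1 := fun x => Real.abs_sin_le_one _
    -- integral identities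
    have hcosInt : ∀ n : ℕ,
        (∫ ω, F ω * F (T^[n] ω) ∂μ) + (∫ ω, G ω * G (T^[n] ω) ∂μ) = Real.cos (n * θ) := by
      intro n
      rw [← integral_add (hint F F hFm hFm hFb1 hFb1 n) (hint G G hGm hGm hGb1 hGb1 n)]
      have : (∫ ω, (F ω * F (T^[n] ω) + G ω * G (T^[n] ω)) ∂μ)
          = ∫ _ : Ω, Real.cos (n * θ) ∂μ := by
        apply integral_congr_ae
        filter_upwards [hpt] with ω hω
        exact (hω n).1
      rw [this, integral_const]
      simp
    have hsinInt : ∀ n : ℕ,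
        (∫ ω, F ω * G (T^[n] ω) ∂μ) - (∫ ω, G ω * F (T^[n] ω) ∂μ) = Real.sin (n * θ) := by
      intro n
      rw [← integral_sub (hint F G hFm hGm hFb1 hGb1 n) (hint G F hGm hFm hGb1 hFb1 n)]
      have : (∫ ω, (F ω * G (T^[n] ω) - G ω * F (T^[n] ω)) ∂μ)
          = ∫ _ : Ω, Real.sin (n * θ) ∂μ := by
        apply integral_congr_ae
        filter_upwards [hpt] with ω hω
        exact (hω n).2
      rw [this, integral_const]
      simp
    -- limits from mixing
    have hFF := hmix F F hFm hFm hFb hFb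
    have hGG := hmix G G hGm hGm hGb hGb
    have hFG := hmix F G hFm hGm hFb hGb
    have hGF := hmix G F hGm hFm hGb hFb
    set a : ℝ := (∫ ω, F ω ∂μ) ^ 2 + (∫ ω, G ω ∂μ) ^ 2 with ha
    have hcosT : Tendsto (fun n : ℕ => Real.cos (n * θ)) atTop (nhds a) := by
      have h := hFF.add hGG
      have heq : (fun n : ℕ => (∫ ω, F ω * F (T^[n] ω) ∂μ) + (∫ ω, G ω * G (T^[n] ω) ∂μ))
          = fun n : ℕ => Real.cos (n * θ) := funext hcosInt
      rw [heq] at h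
      convert h using 2
      rw [ha]; ring
    have hsinT : Tendsto (fun n : ℕ => Real.sin (n * θ)) atTop (nhds 0) := by
      have h := hFG.sub hGF
      have heq : (fun n : ℕ => (∫ ω, F ω * G (T^[n] ω) ∂μ) - (∫ ω, G ω * F (T^[n] ω) ∂μ))
          = fun n : ℕ => Real.sin (n * θ) := funext hsinInt
      rw [heq] at h
      convert h using 2
      ring
    -- shifted limits
    have hcosT1 : Tendsto (fun n : ℕ => Real.cos ((n + 1 : ℕ) * θ)) atTop (nhds a) :=
      hcosT.comp (tendsto_add_atTop_nat 1)
    have hsinT1 : Tendsto (fun n : ℕ => Real.sin ((n + 1 : ℕ) * θ)) atTop (nhds 0) :=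
      hsinT.comp (tendsto_add_atTop_nat 1)
    have hcos_expand : (fun n : ℕ => Real.cos ((n + 1 : ℕ) * θ))
        = fun n : ℕ => Real.cos (n * θ) * Real.cos θ - Real.sin (n * θ) * Real.sin θ := by
      funext n
      have : ((n + 1 : ℕ) : ℝ) * θ = n * θ + θ := by push_cast; ring
      rw [this, Real.cos_add]
    have hsin_expand : (fun n : ℕ => Real.sin ((n + 1 : ℕ) * θ))
        = fun n : ℕ => Real.sin (n * θ) * Real.cos θ + Real.cos (n * θ) * Real.sin θ := by
      funext n
      have : ((n + 1 : ℕ) : ℝ) * θ = n * θ + θ := by push_cast; ring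
      rw [this, Real.sin_add]
    have hlim1 : a = a * Real.cos θ - 0 * Real.sin θ := by
      refine tendsto_nhds_unique hcosT1 ?_
      rw [hcos_expand]
      exact (hcosT.mul tendsto_const_nhds).sub (hsinT.mul tendsto_const_nhds)
    have hlim2 : (0 : ℝ) = 0 * Real.cos θ + a * Real.sin θ := by
      refine tendsto_nhds_unique hsinT1 ?_
      rw [hsin_expand]
      exact (hsinT.mul tendsto_const_nhds).add (hcosT.mul tendsto_const_nhds)
    have hsq : (1 : ℝ) = a ^ 2 + 0 ^ 2 := by
      have h1 : Tendsto (fun n : ℕ => Real.cos (n*θ)^2 + Real.sin (n*θ)^2) atTop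
          (nhds (a^2 + 0^2)) := (hcosT.pow 2).add (hsinT.pow 2)
      have h2 : Tendsto (fun n : ℕ => Real.cos (n*θ)^2 + Real.sin (n*θ)^2) atTop
          (nhds 1) := by
        have he2 : (fun n : ℕ => Real.cos (n*θ)^2 + Real.sin (n*θ)^2) = fun _ : ℕ => (1:ℝ) := by
          funext n; rw [Real.cos_sq_add_sin_sq]
        rw [he2]; exact tendsto_const_nhds
      exact tendsto_nhds_unique h2 h1
    have ha_nonneg : 0 ≤ a := by rw [ha]; exact add_nonneg (sq_nonneg _) (sq_nonneg _)
    have ha1 : a = 1 := aux_a_one ha_nonneg hsq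
    have hcosθ : Real.cos θ = 1 := aux_cos_one ha1 hlim1
    rw [Real.cos_eq_one_iff] at hcosθ
    obtain ⟨n, hn⟩ := hcosθ
    apply hne
    refine ⟨-n, ?_⟩
    rw [hθ] at hn
    have h2pi : (2 * Real.pi) ≠ 0 := mul_ne_zero two_ne_zero Real.pi_ne_zero
    have hn' : (n : ℝ) * (2 * Real.pi) = ((γ - ρ) / e) * (2 * Real.pi) := by linarith
    have hn2 : (n : ℝ) = (γ - ρ) / e := mul_right_cancel₀ h2pi hn'
    have hn3 : (n : ℝ) * e = γ - ρ := by
      rw [hn2]; field_simp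
    push_cast
    linarith
end

section
/- Let X₁, X₂, ... be random variables taking values in {−1, +1} forming a stationary ergodic sequence (under the shift), not almost surely constant, with mean ρ = E[X₁]. If the partial sums Sₙ − ρn form a tight family, then ρ ≠ ±1 and (ρ − 1)/2 is not an integer, so the associated shift system admits a cyclic factor with rotation number ((ρ−1)/2 mod 1) ≠ 0. -/
open MeasureTheory Filter Finset Topology



section aux
variable {Ω : Type*} [MeasurableSpace Ω] {μ : Measure Ω}

private lemma memLp_mul_unimod {w : Ω → ℂ} (hw : Measurable w) (hw1 : ∀ ω, ‖w ω‖ = 1)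
    (g : Lp ℂ 2 μ) : MemLp (fun ω => w ω * g ω) 2 μ := by
  refine ⟨hw.aestronglyMeasurable.mul (Lp.aestronglyMeasurable g), ?_⟩
  have : ∀ᵐ ω ∂μ, ‖w ω * (g : Ω → ℂ) ω‖ = ‖(g : Ω → ℂ) ω‖ :=
    Eventually.of_forall fun ω => by simp [hw1 ω]
  rw [eLpNorm_congr_norm_ae this]
  exact Lp.eLpNorm_lt_top g

/-- multiplication by a unimodular function as a linear isometry of L². -/
private noncomputable def mulUnimod {w : Ω → ℂ} (hw : Measurable w) (hw1 : ∀ ω, ‖w ω‖ = 1) :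
    Lp ℂ 2 μ →ₗᵢ[ℂ] Lp ℂ 2 μ where
  toFun g := (memLp_mul_unimod hw hw1 g).toLp _
  map_add' g₁ g₂ := by
    rw [← MemLp.toLp_add (memLp_mul_unimod hw hw1 g₁) (memLp_mul_unimod hw hw1 g₂)]
    apply MemLp.toLp_congr
    filter_upwards [Lp.coeFn_add g₁ g₂] with ω hω
    simp only [Pi.add_apply, hω]
    ring
  map_smul' c g := by
    show (memLp_mul_unimod hw hw1 (c • g)).toLp _ = c • (memLp_mul_unimod hw hw1 g).toLp _
    rw [← MemLp.toLp_const_smul c (memLp_mul_unimod hw hw1 g)]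
    apply MemLp.toLp_congr
    filter_upwards [Lp.coeFn_smul c g] with ω hω
    simp only [Pi.smul_apply, hω, smul_eq_mul]
    ring
  norm_map' g := by
    show ‖(memLp_mul_unimod hw hw1 g).toLp _‖ = ‖g‖
    rw [Lp.norm_toLp, eLpNorm_congr_norm_ae
      (Eventually.of_forall fun ω => by simp [hw1 ω] :
        ∀ᵐ ω ∂μ, ‖w ω * (g : Ω → ℂ) ω‖ = ‖(g : Ω → ℂ) ω‖), Lp.norm_def]

private lemma coeFn_mulUnimod {w : Ω → ℂ} (hw : Measurable w) (hw1 : ∀ ω, ‖w ω‖ = 1)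
    (g : Lp ℂ 2 μ) : mulUnimod hw hw1 g =ᵐ[μ] fun ω => w ω * g ω :=
  MemLp.coeFn_toLp (memLp_mul_unimod hw hw1 g)

private lemma exists_eigenfunction (μ : Measure Ω) [IsProbabilityMeasure μ]
    {T : Ω → Ω} (hT : MeasurePreserving T μ μ)
    {w : Ω → ℂ} (hw : Measurable w) (hw1 : ∀ ω, ‖w ω‖ = 1)
    (hlb : ∀ n : ℕ, (1:ℝ)/4 ≤ (∫ ω, (∏ j ∈ Finset.range n, w (T^[j] ω)) ∂μ).re) :
    ∃ h : Lp ℂ 2 μ, h ≠ 0 ∧ (∀ᵐ ω ∂μ, w ω * (h : Ω → ℂ) (T ω) = (h : Ω → ℂ) ω) := by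
  set Viso : Lp ℂ 2 μ →ₗᵢ[ℂ] Lp ℂ 2 μ :=
    (mulUnimod hw hw1).comp (Lp.compMeasurePreservingₗᵢ ℂ T hT) with hViso
  set V : Lp ℂ 2 μ →L[ℂ] Lp ℂ 2 μ := Viso.toContinuousLinearMap with hV
  have hVnorm : ‖V‖ ≤ 1 := Viso.norm_toContinuousLinearMap_le
  have hVapply : ∀ g : Lp ℂ 2 μ, (V g : Ω → ℂ) =ᵐ[μ] fun ω => w ω * g (T ω) := by
    intro g
    have h1 : (V g : Ω → ℂ) =ᵐ[μ]
        fun ω => w ω * (Lp.compMeasurePreserving T hT g : Ω → ℂ) ω :=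
      coeFn_mulUnimod hw hw1 _
    have h2 : (Lp.compMeasurePreserving T hT g : Ω → ℂ) =ᵐ[μ] (g : Ω → ℂ) ∘ T :=
      Lp.coeFn_compMeasurePreserving g hT
    filter_upwards [h1, h2] with ω e1 e2
    rw [e1, e2]; rfl
  -- the constant function 1
  set one : Lp ℂ 2 μ := Lp.const 2 μ (1 : ℂ) with hone
  have hone_ae : (one : Ω → ℂ) =ᵐ[μ] fun _ => 1 := Lp.coeFn_const ..
  -- iterates of V applied to 1
  have hWn : ∀ n : ℕ, ((⇑V)^[n] one : Ω → ℂ) =ᵐ[μ]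
      fun ω => ∏ j ∈ Finset.range n, w (T^[j] ω) := by
    intro n
    induction n with
    | zero => simpa using hone_ae
    | succ n ih =>
      rw [Function.iterate_succ_apply']
      have h2 : (((⇑V)^[n] one : Ω → ℂ) ∘ T) =ᵐ[μ]
          (fun ω => ∏ j ∈ Finset.range n, w (T^[j] ω)) ∘ T :=
        hT.quasiMeasurePreserving.ae_eq ih
      filter_upwards [hVapply ((⇑V)^[n] one), h2] with ω e1 e2
      rw [e1]
      have : ((⇑V)^[n] one : Ω → ℂ) (T ω) = ∏ j ∈ Finset.range n, w (T^[j] (T ω)) := e2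
      rw [this, Finset.prod_range_succ' (fun j => w (T^[j] ω)) n]
      simp [Function.iterate_succ_apply, mul_comm]
  -- lower bound on re⟨Vⁿ1, 1⟩
  have hinner : ∀ n : ℕ, (1:ℝ)/4 ≤ (inner ℂ ((⇑V)^[n] one) one : ℂ).re := by
    intro n
    rw [L2.inner_def]
    have : (∫ a, (inner ℂ (((⇑V)^[n] one : Ω → ℂ) a) ((one : Ω → ℂ) a) : ℂ) ∂μ)
        = ∫ a, (starRingEnd ℂ) (∏ j ∈ Finset.range n, w (T^[j] a)) ∂μ := by
      apply integral_congr_ae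
      filter_upwards [hWn n, hone_ae] with ω e1 e2
      rw [RCLike.inner_apply, e1, e2, one_mul]
    rw [this, integral_conj, Complex.conj_re]
    exact hlb n
  -- mean ergodic theorem
  have hbk := V.tendsto_birkhoffAverage_orthogonalProjection hVnorm one
  set P1 : Lp ℂ 2 μ := ((V.eqLocus (1 : Lp ℂ 2 μ →L[ℂ] Lp ℂ 2 μ)).orthogonalProjectionOnto one : Lp ℂ 2 μ)
    with hP1
  have hav : ∀ N : ℕ, 1 ≤ N → (1:ℝ)/4 ≤ (inner ℂ (birkhoffAverage ℂ (⇑V) id N one) one : ℂ).re := by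
    intro N hN
    rw [birkhoffAverage, birkhoffSum]
    simp only [id]
    rw [inner_smul_left, sum_inner]
    have hconj : (starRingEnd ℂ) ((N : ℂ)⁻¹) = (((N : ℝ)⁻¹ : ℝ) : ℂ) := by
      rw [map_inv₀, map_natCast]; push_cast; ring
    rw [hconj, Complex.re_ofReal_mul]
    have hsum : (N : ℝ) * ((1:ℝ)/4) ≤
        (∑ k ∈ Finset.range N, (inner ℂ ((⇑V)^[k] one) one : ℂ)).re := by
      rw [Complex.re_sum]
      calc (N : ℝ) * ((1:ℝ)/4) = ∑ _k ∈ Finset.range N, (1:ℝ)/4 := by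
            simp [Finset.sum_const, mul_comm]
        _ ≤ _ := Finset.sum_le_sum fun k _ => hinner k
    have hNpos : (0:ℝ) < N := by exact_mod_cast hN
    calc (1:ℝ)/4 = (N:ℝ)⁻¹ * ((N:ℝ) * ((1:ℝ)/4)) := by field_simp
      _ ≤ _ := by
          apply mul_le_mul_of_nonneg_left hsum (by positivity)
  have hlim : Tendsto (fun N => (inner ℂ (birkhoffAverage ℂ (⇑V) id N one) one : ℂ).re)
      atTop (𝓝 ((inner ℂ P1 one : ℂ).re)) :=
    (Complex.continuous_re.tendsto _).comp (hbk.inner tendsto_const_nhds)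
  have hPlb : (1:ℝ)/4 ≤ (inner ℂ P1 one : ℂ).re :=
    ge_of_tendsto hlim ((eventually_ge_atTop 1).mono fun N hN => hav N hN)
  have hPne : P1 ≠ 0 := by
    intro h0
    rw [h0] at hPlb
    simp at hPlb
    linarith
  have hPfix : V P1 = P1 := ((V.eqLocus (1 : Lp ℂ 2 μ →L[ℂ] Lp ℂ 2 μ)).orthogonalProjectionOnto one).2
  refine ⟨P1, hPne, ?_⟩
  have := hVapply P1
  rw [hPfix] at this
  filter_upwards [this] with ω e
  exact e.symm
end aux


private lemma addcircle_coe_int_eq_zero (k : ℤ) : ((k : ℝ) : AddCircle (1:ℝ)) = 0 :=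
  (AddCircle.coe_eq_zero_iff _).2 ⟨k, by simp⟩

private lemma arg_angle_exp (x : ℝ) :
    ((Complex.exp ((x : ℂ) * Complex.I)).arg : Real.Angle) = (x : Real.Angle) := by
  have := Real.Angle.arg_toCircle (x : Real.Angle)
  rwa [Real.Angle.toCircle_coe, Circle.coe_exp] at this

private lemma exists_circle_factor {Ω : Type*} [MeasurableSpace Ω] (μ : Measure Ω)
    [IsProbabilityMeasure μ] {T : Ω → Ω} (herg : Ergodic T μ)
    {a : Ω → ℝ}
    {h : Lp ℂ 2 μ} (hne : h ≠ 0)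
    (heig : ∀ᵐ ω ∂μ, (h : Ω → ℂ) (T ω)
      = Complex.exp ((2 * Real.pi * a ω : ℝ) * Complex.I) * (h : Ω → ℂ) ω) :
    ∃ φ : Ω → AddCircle (1:ℝ), Measurable φ ∧
      ∀ᵐ ω ∂μ, φ (T ω) = φ ω + ((a ω : ℝ) : AddCircle (1:ℝ)) := by
  set sm := Lp.aestronglyMeasurable h with hsm
  set g : Ω → ℂ := sm.mk _ with hg
  have hgm : Measurable g := sm.stronglyMeasurable_mk.measurable
  have hgeq : (h : Ω → ℂ) =ᵐ[μ] g := sm.ae_eq_mk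
  have hgeqT : ((h : Ω → ℂ) ∘ T) =ᵐ[μ] (g ∘ T) :=
    herg.toMeasurePreserving.quasiMeasurePreserving.ae_eq hgeq
  have heig' : ∀ᵐ ω ∂μ, g (T ω)
      = Complex.exp ((2 * Real.pi * a ω : ℝ) * Complex.I) * g ω := by
    filter_upwards [heig, hgeq, hgeqT] with ω e1 e2 e3
    have : (h : Ω → ℂ) (T ω) = g (T ω) := e3
    rw [← this, e1, e2]
  -- |g| is a.e. invariant, hence a.e. constant
  have habs_inv : (fun ω => ‖g ω‖) ∘ T =ᵐ[μ] fun ω => ‖g ω‖ := by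
    filter_upwards [heig'] with ω e1
    show ‖g (T ω)‖ = ‖g ω‖
    rw [e1, norm_mul, Complex.norm_exp_ofReal_mul_I, one_mul]
  obtain ⟨c, hc⟩ := herg.ae_eq_const_of_ae_eq_comp₀
    ((continuous_norm.measurable.comp hgm).nullMeasurable) habs_inv
  have hcne : c ≠ 0 := by
    intro h0
    apply hne
    rw [Lp.eq_zero_iff_ae_eq_zero]
    filter_upwards [hgeq, hc] with ω e1 e2
    simp only [Function.comp_apply, Function.const_apply] at e2
    have : ‖g ω‖ = 0 := by rw [e2, h0]
    simp only [norm_eq_zero] at this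
    show (h : Ω → ℂ) ω = 0
    rw [e1, this]
  have hgne : ∀ᵐ ω ∂μ, g ω ≠ 0 := by
    filter_upwards [hc] with ω e1 e2
    simp only [Function.comp_apply, Function.const_apply] at e1
    exact hcne (by rw [← e1, e2, norm_zero])
  have hgneT : ∀ᵐ ω ∂μ, g (T ω) ≠ 0 := by
    have := herg.toMeasurePreserving.quasiMeasurePreserving.ae
      (p := fun ω => g ω ≠ 0) hgne
    exact this
  refine ⟨fun ω => ((Complex.arg (g ω) / (2 * Real.pi) : ℝ) : AddCircle (1:ℝ)), ?_, ?_⟩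
  · exact (AddCircle.measurable_mk' ..).comp
      ((Complex.measurable_arg.comp hgm).div_const _)
  · filter_upwards [heig', hgne] with ω e1 e2
    have hexp_ne : Complex.exp ((2 * Real.pi * a ω : ℝ) * Complex.I) ≠ 0 :=
      Complex.exp_ne_zero _
    have hz : ((g (T ω)).arg : Real.Angle)
        = ((2 * Real.pi * a ω + (g ω).arg : ℝ) : Real.Angle) := by
      rw [e1, Complex.arg_mul_coe_angle hexp_ne e2, arg_angle_exp, Real.Angle.coe_add]
    obtain ⟨k, hk⟩ := Real.Angle.angle_eq_iff_two_pi_dvd_sub.1 hz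
    have hpi : (2 * Real.pi) ≠ 0 := by positivity
    have harg : (g (T ω)).arg / (2 * Real.pi)
        = (g ω).arg / (2 * Real.pi) + a ω + (k : ℝ) := by
      field_simp at hk ⊢
      linarith
    rw [harg, AddCircle.coe_add, AddCircle.coe_add, addcircle_coe_int_eq_zero, add_zero]

private lemma addCircle_coe_add_one (x : ℝ) :
    ((x + 1 : ℝ) : AddCircle (1:ℝ)) = (x : AddCircle (1:ℝ)) := by
  have h1 : ((1:ℝ) : AddCircle (1:ℝ)) = 0 := (AddCircle.coe_eq_zero_iff _).2 ⟨1, by simp⟩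
  rw [AddCircle.coe_add, h1, add_zero]

/-- Example 3 of the paper: a stationary ergodic ±1-valued sequence, not a.s. constant,
with tight centered partial sums, has mean ρ ≠ ±1 with (ρ−1)/2 ∉ ℤ, and the shift
system admits a cyclic factor with nonzero rotation number (ρ−1)/2 mod 1. -/
theorem pm_one_charges_cyclic_factor {Ω : Type*} [MeasurableSpace Ω]
    (μ : Measure Ω) [IsProbabilityMeasure μ]
    (T : Ω → Ω) (herg : Ergodic T μ)
    (X : Ω → ℝ) (hX : Measurable X)
    (hval : ∀ ω, X ω = 1 ∨ X ω = -1)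
    (hnc₁ : ¬ (∀ᵐ ω ∂μ, X ω = 1)) (hnc₂ : ¬ (∀ᵐ ω ∂μ, X ω = -1))
    (ρ : ℝ) (hρ : ρ = ∫ ω, X ω ∂μ)
    (htight : ∀ ε > (0 : ℝ), ∃ M > (0 : ℝ), ∀ n : ℕ,
      μ {ω | M ≤ |(∑ j ∈ Finset.range n, X (T^[j] ω)) - ρ * n|} ≤ ENNReal.ofReal ε) :
    ρ ≠ 1 ∧ ρ ≠ -1 ∧ (¬ ∃ k : ℤ, (ρ - 1) / 2 = (k : ℝ)) ∧
    ((((ρ - 1) / 2 : ℝ) : AddCircle (1 : ℝ)) ≠ 0 ∧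
      ∃ φ : Ω → AddCircle (1 : ℝ), Measurable φ ∧
        ∀ᵐ ω ∂μ, φ (T ω) = φ ω + (((ρ - 1) / 2 : ℝ) : AddCircle (1 : ℝ))) := by
  have hTm : Measurable T := herg.toMeasurePreserving.measurable
  -- integrability and strict bounds on ρ
  have hXint : Integrable X μ := by
    refine (integrable_const (1:ℝ)).mono' hX.aestronglyMeasurable ?_
    exact Eventually.of_forall fun ω => by rcases hval ω with h | h <;> simp [h]
  have hρ_lt : ρ < 1 := by
    have hnn : 0 ≤ᵐ[μ] fun ω => 1 - X ω :=
      Eventually.of_forall fun ω => by rcases hval ω with h | h <;> simp [h] <;> norm_num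
    have hint : Integrable (fun ω => 1 - X ω) μ := (integrable_const 1).sub hXint
    have hne : ¬ ((fun ω => 1 - X ω) =ᵐ[μ] 0) := by
      intro hcontra
      apply hnc₁
      filter_upwards [hcontra] with ω e
      have : 1 - X ω = 0 := e
      linarith
    have hne' : ∫ ω, (1 - X ω) ∂μ ≠ 0 :=
      fun h0 => hne ((integral_eq_zero_iff_of_nonneg_ae hnn hint).1 h0)
    have hge : 0 ≤ ∫ ω, (1 - X ω) ∂μ := integral_nonneg_of_ae hnn
    have hpos : 0 < ∫ ω, (1 - X ω) ∂μ := lt_of_le_of_ne hge (Ne.symm hne')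
    have hcomp : ∫ ω, (1 - X ω) ∂μ = 1 - ρ := by
      rw [integral_sub (integrable_const 1) hXint, integral_const]
      simp [hρ]
    linarith [hcomp ▸ hpos]
  have hρ_gt : -1 < ρ := by
    have hnn : 0 ≤ᵐ[μ] fun ω => X ω + 1 :=
      Eventually.of_forall fun ω => by rcases hval ω with h | h <;> simp [h] <;> norm_num
    have hint : Integrable (fun ω => X ω + 1) μ := hXint.add (integrable_const 1)
    have hne : ¬ ((fun ω => X ω + 1) =ᵐ[μ] 0) := by
      intro hcontra
      apply hnc₂
      filter_upwards [hcontra] with ω e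
      have : X ω + 1 = 0 := e
      linarith
    have hne' : ∫ ω, (X ω + 1) ∂μ ≠ 0 :=
      fun h0 => hne ((integral_eq_zero_iff_of_nonneg_ae hnn hint).1 h0)
    have hge : 0 ≤ ∫ ω, (X ω + 1) ∂μ := integral_nonneg_of_ae hnn
    have hpos : 0 < ∫ ω, (X ω + 1) ∂μ := lt_of_le_of_ne hge (Ne.symm hne')
    have hcomp : ∫ ω, (X ω + 1) ∂μ = ρ + 1 := by
      rw [integral_add hXint (integrable_const 1), integral_const]
      simp [hρ]
    linarith [hcomp ▸ hpos]
  have hnint : ¬ ∃ k : ℤ, (ρ - 1) / 2 = (k : ℝ) := by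
    rintro ⟨k, hk⟩
    have h1 : ((k : ℝ)) < 0 := by rw [← hk]; linarith
    have h2 : (-1 : ℝ) < (k : ℝ) := by rw [← hk]; linarith
    have h1' : k < 0 := by exact_mod_cast h1
    have h2' : (-1 : ℤ) < k := by exact_mod_cast h2
    omega
  have hcirc : (((ρ - 1) / 2 : ℝ) : AddCircle (1 : ℝ)) ≠ 0 := by
    intro h0
    rw [AddCircle.coe_eq_zero_iff] at h0
    obtain ⟨n, hn⟩ := h0
    exact hnint ⟨n, by rw [← hn]; simp⟩
  refine ⟨by linarith, by linarith, hnint, hcirc, ?_⟩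
  -- tightness data
  obtain ⟨M, hMpos, htight'⟩ := htight (1/8) (by norm_num)
  set m : ℕ := max 1 ⌈8 * M⌉₊ with hm
  have hm1 : 1 ≤ m := le_max_left _ _
  have hmpos : (0:ℝ) < m := by exact_mod_cast hm1
  have hmM : 8 * M ≤ (m : ℝ) := le_trans (Nat.le_ceil _) (by exact_mod_cast le_max_right _ _)
  set t : ℝ := 1 / (2 * m) with ht
  have htpos : 0 < t := by positivity
  -- the weight
  set w : Ω → ℂ := fun ω => Complex.exp (((2 * Real.pi * (t * (X ω - ρ)) : ℝ) : ℂ) * Complex.I)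
    with hwdef
  have hw : Measurable w := by
    apply Complex.continuous_exp.measurable.comp
    exact (Complex.measurable_ofReal.comp
      (measurable_const.mul ((hX.sub measurable_const).const_mul t))).mul_const _
  have hw1 : ∀ ω, ‖w ω‖ = 1 := fun ω => by
    show ‖Complex.exp (((2 * Real.pi * (t * (X ω - ρ)) : ℝ) : ℂ) * Complex.I)‖ = 1
    rw [Complex.norm_exp_ofReal_mul_I]
  -- partial sums
  have hSmeas : ∀ n : ℕ, Measurable fun ω => (∑ j ∈ Finset.range n, X (T^[j] ω)) - ρ * n :=
    fun n => (Finset.measurable_sum _ fun j _ => hX.comp (hTm.iterate j)).sub measurable_const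
  have hprod : ∀ n : ℕ, ∀ ω, (∏ j ∈ Finset.range n, w (T^[j] ω)) =
      Complex.exp ((((2 * Real.pi * (t * ((∑ j ∈ Finset.range n, X (T^[j] ω)) - ρ * n))) : ℝ) : ℂ)
        * Complex.I) := by
    intro n ω
    rw [← Complex.exp_sum]
    congr 1
    have hre : (∑ j ∈ Finset.range n, (2*Real.pi*(t*(X (T^[j] ω) - ρ))))
        = 2*Real.pi*(t*((∑ j ∈ Finset.range n, X (T^[j] ω)) - ρ*n)) := by
      have hterm : ∀ j, 2*Real.pi*(t*(X (T^[j] ω) - ρ))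
          = (2*Real.pi*t) * (X (T^[j] ω)) - (2*Real.pi*t)*ρ := fun j => by ring
      rw [Finset.sum_congr rfl fun j _ => hterm j, Finset.sum_sub_distrib, ← Finset.mul_sum,
        Finset.sum_const, Finset.card_range, nsmul_eq_mul]
      ring
    rw [← Finset.sum_mul, ← Complex.ofReal_sum]
    rw [Complex.ofReal_inj.2 hre]
  -- lower bound for the integrals
  have hlb : ∀ n : ℕ, (1:ℝ)/4 ≤ (∫ ω, (∏ j ∈ Finset.range n, w (T^[j] ω)) ∂μ).re := by
    intro n
    set θ : Ω → ℝ := fun ω => (∑ j ∈ Finset.range n, X (T^[j] ω)) - ρ * n with hθ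
    have hθm : Measurable θ := hSmeas n
    have hWint : Integrable (fun ω => ∏ j ∈ Finset.range n, w (T^[j] ω)) μ := by
      refine (integrable_const (1:ℝ)).mono' ?_ ?_
      · exact (Finset.measurable_prod _ fun j _ => hw.comp (hTm.iterate j)).aestronglyMeasurable
      · refine Eventually.of_forall fun ω => ?_
        rw [hprod n ω, Complex.norm_exp_ofReal_mul_I]
    have hre : (∫ ω, (∏ j ∈ Finset.range n, w (T^[j] ω)) ∂μ).re
        = ∫ ω, Real.cos (2 * Real.pi * (t * θ ω)) ∂μ := by
      rw [← RCLike.re_to_complex, ← integral_re hWint]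
      apply integral_congr_ae
      refine Eventually.of_forall fun ω => ?_
      show RCLike.re (∏ j ∈ Finset.range n, w (T^[j] ω)) = Real.cos (2 * Real.pi * (t * θ ω))
      rw [hprod n ω, RCLike.re_to_complex, Complex.exp_ofReal_mul_I_re]
    rw [hre]
    -- bad set
    set B : Set Ω := {ω | M ≤ |θ ω|} with hB
    have hBmeas : MeasurableSet B := measurableSet_le measurable_const hθm.abs
    have hμB : (μ B).toReal ≤ 1/8 := by
      have := htight' n
      calc (μ B).toReal ≤ (ENNReal.ofReal (1/8)).toReal :=
            ENNReal.toReal_mono ENNReal.ofReal_ne_top this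
        _ = 1/8 := ENNReal.toReal_ofReal (by norm_num)
    have hpt : ∀ ω, (1:ℝ)/2 - (3/2) * B.indicator (fun _ => (1:ℝ)) ω
        ≤ Real.cos (2 * Real.pi * (t * θ ω)) := by
      intro ω
      by_cases hωB : ω ∈ B
      · rw [Set.indicator_of_mem hωB]
        have := Real.neg_one_le_cos (2 * Real.pi * (t * θ ω))
        linarith
      · rw [Set.indicator_of_notMem hωB]
        have hθlt : |θ ω| < M := lt_of_not_ge hωB
        have hx : |2 * Real.pi * (t * θ ω)| ≤ 1/2 := by
          have h1 : |2 * Real.pi * (t * θ ω)| = 2 * Real.pi * (t * |θ ω|) := by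
            rw [abs_mul (2 * Real.pi) (t * θ ω), abs_mul t (θ ω),
              abs_of_pos (show (0:ℝ) < 2 * Real.pi by positivity), abs_of_pos htpos]
          rw [h1]
          have htM : t * |θ ω| ≤ 1/16 := by
            have ha1 : t * |θ ω| ≤ t * M := by nlinarith [abs_nonneg (θ ω)]
            have ha2 : t * M ≤ 1/16 := by
              rw [ht, div_mul_eq_mul_div, one_mul, div_le_div_iff₀ (by positivity) (by norm_num)]
              nlinarith
            linarith
          nlinarith [Real.pi_le_four, Real.pi_pos]
        obtain ⟨hxl, hxr⟩ := abs_le.1 hx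
        have hcos := Real.one_sub_sq_div_two_le_cos (x := 2 * Real.pi * (t * θ ω))
        nlinarith
    have hcos_int : Integrable (fun ω => Real.cos (2 * Real.pi * (t * θ ω))) μ := by
      refine (integrable_const (1:ℝ)).mono' ?_ ?_
      · exact (Real.measurable_cos.comp
          ((hθm.const_mul t).const_mul (2 * Real.pi))).aestronglyMeasurable
      · exact Eventually.of_forall fun ω => by
          rw [Real.norm_eq_abs]; exact Real.abs_cos_le_one _
    have hind_int : Integrable (fun ω => (1:ℝ)/2 - (3/2) * B.indicator (fun _ => (1:ℝ)) ω) μ := by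
      exact (integrable_const _).sub (((integrable_const (1:ℝ)).indicator hBmeas).const_mul _)
    have hmono := integral_mono hind_int hcos_int (fun ω => hpt ω)
    have hval2 : ∫ ω, ((1:ℝ)/2 - (3/2) * B.indicator (fun _ => (1:ℝ)) ω) ∂μ
        = 1/2 - (3/2) * (μ B).toReal := by
      rw [integral_sub (integrable_const _)
        (((integrable_const (1:ℝ)).indicator hBmeas).const_mul _), integral_const]
      simp only [measure_univ, ENNReal.toReal_one, smul_eq_mul, one_mul]
      rw [integral_const_mul, integral_indicator_const _ hBmeas]
      simp [measureReal_def]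
    rw [hval2] at hmono
    linarith
  -- eigenfunction
  obtain ⟨hh, hhne, hheig⟩ := exists_eigenfunction μ herg.toMeasurePreserving hw hw1 hlb
  -- convert eigen-relation
  have heig2 : ∀ᵐ ω ∂μ, (hh : Ω → ℂ) (T ω)
      = Complex.exp (((2 * Real.pi * (t * (ρ - X ω)) : ℝ) : ℂ) * Complex.I) * (hh : Ω → ℂ) ω := by
    filter_upwards [hheig] with ω e
    have hkey : Complex.exp (((2 * Real.pi * (t * (ρ - X ω)) : ℝ) : ℂ) * Complex.I) * w ω = 1 := by
      rw [hwdef, ← Complex.exp_add]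
      rw [show (((2 * Real.pi * (t * (ρ - X ω)) : ℝ) : ℂ) * Complex.I +
          ((2 * Real.pi * (t * (X ω - ρ)) : ℝ) : ℂ) * Complex.I) = 0 by push_cast; ring]
      exact Complex.exp_zero
    calc (hh : Ω → ℂ) (T ω)
        = (Complex.exp (((2 * Real.pi * (t * (ρ - X ω)) : ℝ) : ℂ) * Complex.I) * w ω)
          * (hh : Ω → ℂ) (T ω) := by rw [hkey, one_mul]
      _ = Complex.exp (((2 * Real.pi * (t * (ρ - X ω)) : ℝ) : ℂ) * Complex.I)
          * (w ω * (hh : Ω → ℂ) (T ω)) := by ring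
      _ = _ := by rw [e]
  obtain ⟨φ₁, hφ₁m, hφ₁⟩ := exists_circle_factor μ herg hhne heig2
  refine ⟨fun ω => (m : ℤ) • φ₁ ω, ((continuous_zsmul (m:ℤ)).measurable).comp hφ₁m, ?_⟩
  filter_upwards [hφ₁] with ω e
  show (m : ℤ) • φ₁ (T ω) = (m : ℤ) • φ₁ ω + _
  rw [e, smul_add]
  congr 1
  rw [← AddCircle.coe_zsmul]
  have h2 : ((m:ℤ) • (t * (ρ - X ω)) : ℝ) = (ρ - X ω)/2 := by
    rw [zsmul_eq_mul, ht]
    push_cast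
    field_simp
  rw [h2]
  rcases hval ω with hx | hx
  · rw [hx]
  · rw [hx, show (ρ - (-1:ℝ))/2 = (ρ-1)/2 + 1 by ring, addCircle_coe_add_one]
end

section
/- Let T be measure-preserving on a probability space and f measurable with tight cocycle sums Fₙ = Σ_{j=0}^{n−1} f∘Tʲ. Then for μ-almost every ω, Fₙ(ω)/n → 0 as n → ∞. -/
open MeasureTheory Filter

set_option linter.unusedSectionVars false

namespace TightCocycle
open scoped Classical

variable {Ω : Type*} [MeasurableSpace Ω]

noncomputable def F (T : Ω → Ω) (f : Ω → ℝ) (n : ℕ) (ω : Ω) : ℝ :=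
  ∑ j ∈ Finset.range n, f (T^[j] ω)

lemma F_zero (T : Ω → Ω) (f : Ω → ℝ) (ω : Ω) : F T f 0 ω = 0 := by simp [F]

lemma F_succ (T : Ω → Ω) (f : Ω → ℝ) (n : ℕ) (ω : Ω) :
    F T f (n + 1) ω = f ω + F T f n (T ω) := by
  unfold F
  rw [Finset.sum_range_succ']
  simp [Function.iterate_succ_apply, add_comm]

lemma F_measurable {T : Ω → Ω} {f : Ω → ℝ} (hT : Measurable T) (hf : Measurable f) (n : ℕ) :
    Measurable (F T f n) :=
  Finset.measurable_sum _ fun j _ => hf.comp (hT.iterate j)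

lemma F_integrable {μ : Measure Ω} {T : Ω → Ω} {f : Ω → ℝ} (hT : MeasurePreserving T μ μ)
    (hf : Integrable f μ) (n : ℕ) : Integrable (F T f n) μ :=
  integrable_finset_sum _ fun j _ =>
    (hT.iterate j).integrable_comp hf.aestronglyMeasurable |>.mpr hf

/-- Maximal function: max of 0, F 1, ..., F N. -/
noncomputable def M (T : Ω → Ω) (f : Ω → ℝ) : ℕ → Ω → ℝ
  | 0 => fun _ => 0
  | N + 1 => fun ω => max (M T f N ω) (F T f (N + 1) ω)

lemma M_mono (T : Ω → Ω) (f : Ω → ℝ) (N : ℕ) (ω : Ω) : M T f N ω ≤ M T f (N + 1) ω :=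
  le_max_left _ _

lemma M_nonneg (T : Ω → Ω) (f : Ω → ℝ) (N : ℕ) (ω : Ω) : 0 ≤ M T f N ω := by
  induction N with
  | zero => simp [M]
  | succ N ih => exact ih.trans (M_mono T f N ω)

lemma F_le_M (T : Ω → Ω) (f : Ω → ℝ) {k N : ℕ} (h : k ≤ N) (ω : Ω) :
    F T f k ω ≤ M T f N ω := by
  induction N with
  | zero => simp_all [F_zero, M]
  | succ N ih =>
    rcases Nat.eq_or_lt_of_le h with rfl | h'
    · exact le_max_right _ _
    · exact (ih (Nat.lt_succ_iff.mp h')).trans (M_mono T f N ω)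

lemma M_key (T : Ω → Ω) (f : Ω → ℝ) (N : ℕ) (ω : Ω) :
    M T f (N + 1) ω ≤ max 0 (f ω + M T f N (T ω)) := by
  induction N generalizing ω with
  | zero =>
    show max _ _ ≤ _
    simp only [M, F_succ, F_zero, add_zero]
    exact max_le_max le_rfl le_rfl
  | succ N ih =>
    show max _ _ ≤ _
    apply max_le
    · exact (ih ω).trans (max_le_max le_rfl (by gcongr; exact M_mono T f N (T ω)))
    · rw [F_succ]
      exact le_max_of_le_right (by gcongr; exact F_le_M T f le_rfl (T ω))

lemma M_measurable {T : Ω → Ω} {f : Ω → ℝ} (hT : Measurable T) (hf : Measurable f) (N : ℕ) :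
    Measurable (M T f N) := by
  induction N with
  | zero => exact measurable_const
  | succ N ih => exact ih.max (F_measurable hT hf (N + 1))

lemma M_integrable {μ : Measure Ω} {T : Ω → Ω} {f : Ω → ℝ} (hT : MeasurePreserving T μ μ)
    (hf : Integrable f μ) (N : ℕ) : Integrable (M T f N) μ := by
  induction N with
  | zero => exact integrable_zero _ _ _
  | succ N ih =>
    have := ih.sup (F_integrable hT hf (N + 1))
    simpa [Pi.sup_def, M] using this

/-- integral invariance -/
lemma integral_comp_iter {μ : Measure Ω} {T : Ω → Ω} (hT : MeasurePreserving T μ μ)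
    {g : Ω → ℝ} (hg : AEStronglyMeasurable g μ) (j : ℕ) :
    ∫ ω, g (T^[j] ω) ∂μ = ∫ ω, g ω ∂μ := by
  have h := (hT.iterate j)
  rw [← integral_map h.measurable.aemeasurable (by rwa [h.map_eq])]
  rw [h.map_eq]

lemma integrable_comp_iter {μ : Measure Ω} {T : Ω → Ω} (hT : MeasurePreserving T μ μ)
    {g : Ω → ℝ} (hg : Integrable g μ) (j : ℕ) :
    Integrable (fun ω => g (T^[j] ω)) μ :=
  ((hT.iterate j).integrable_comp hg.aestronglyMeasurable).mpr hg

/-- Hopf maximal ergodic lemma. -/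
lemma hopf {μ : Measure Ω} [IsFiniteMeasure μ] {T : Ω → Ω} (hT : MeasurePreserving T μ μ)
    {f : Ω → ℝ} (hfm : Measurable f) (hf : Integrable f μ) (N : ℕ) :
    0 ≤ ∫ ω in {ω | 0 < M T f N ω}, f ω ∂μ := by
  rcases N with _ | N
  · simp [M]
  set E : Set Ω := {ω | 0 < M T f (N + 1) ω} with hE
  have hEm : MeasurableSet E := measurableSet_lt measurable_const (M_measurable hT.measurable hfm _)
  have hMi : Integrable (M T f (N + 1)) μ := M_integrable hT hf _
  have hMTi : Integrable (fun ω => M T f (N + 1) (T ω)) μ :=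
    (hT.integrable_comp hMi.aestronglyMeasurable).mpr hMi
  -- pointwise on E : M(N+1) ω - M(N+1)(Tω) ≤ f ω
  have hpt : ∀ ω ∈ E, M T f (N + 1) ω - M T f (N + 1) (T ω) ≤ f ω := by
    intro ω hω
    have h1 := M_key T f N ω
    have h2 : M T f (N + 1) ω ≤ f ω + M T f N (T ω) := by
      rcases max_cases (0 : ℝ) (f ω + M T f N (T ω)) with ⟨he, _⟩ | ⟨he, _⟩
      · exact absurd (h1.trans_eq he) (not_le.mpr hω)
      · exact h1.trans_eq he
    have h3 : M T f N (T ω) ≤ M T f (N + 1) (T ω) := M_mono T f N (T ω)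
    linarith
  have step1 : ∫ ω in E, (M T f (N + 1) ω - M T f (N + 1) (T ω)) ∂μ ≤ ∫ ω in E, f ω ∂μ := by
    apply setIntegral_mono_on (hMi.sub hMTi).integrableOn hf.integrableOn hEm hpt
  have step2 : ∫ ω in E, (M T f (N + 1) ω - M T f (N + 1) (T ω)) ∂μ
      = ∫ ω in E, M T f (N + 1) ω ∂μ - ∫ ω in E, M T f (N + 1) (T ω) ∂μ :=
    integral_sub hMi.integrableOn hMTi.integrableOn
  have step3 : ∫ ω in E, M T f (N + 1) ω ∂μ = ∫ ω, M T f (N + 1) ω ∂μ := by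
    rw [← integral_add_compl hEm hMi]
    have : ∫ ω in Eᶜ, M T f (N + 1) ω ∂μ = 0 := by
      apply setIntegral_eq_zero_of_forall_eq_zero
      intro ω hω
      exact le_antisymm (not_lt.mp hω) (M_nonneg T f (N + 1) ω)
    rw [this, add_zero]
  have step4 : ∫ ω in E, M T f (N + 1) (T ω) ∂μ ≤ ∫ ω, M T f (N + 1) (T ω) ∂μ := by
    apply setIntegral_le_integral hMTi
    exact Filter.Eventually.of_forall fun ω => M_nonneg T f (N + 1) (T ω)
  have step5 : ∫ ω, M T f (N + 1) (T ω) ∂μ = ∫ ω, M T f (N + 1) ω ∂μ := by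
    simpa using integral_comp_iter hT hMi.aestronglyMeasurable 1
  linarith

/-! ### The invariant set -/

/-- The (exactly invariant) set where `F n - δ n` is unbounded above. -/
def A (T : Ω → Ω) (f : Ω → ℝ) (δ : ℝ) : Set Ω :=
  {ω | ∀ c : ℝ, ∀ m : ℕ, ∃ n, m ≤ n ∧ c < F T f n ω - δ * n}

lemma A_measurable {T : Ω → Ω} {f : Ω → ℝ} (hT : Measurable T) (hf : Measurable f) (δ : ℝ) :
    MeasurableSet (A T f δ) := by
  have : A T f δ = ⋂ (k : ℕ), ⋂ (m : ℕ), ⋃ (n : ℕ), ⋃ (_ : m ≤ n),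
      {ω | (k : ℝ) < F T f n ω - δ * n} := by
    ext ω
    simp only [Set.mem_iInter, Set.mem_iUnion, Set.mem_setOf_eq, A]
    constructor
    · intro h k m; obtain ⟨n, hn, hlt⟩ := h k m; exact ⟨n, hn, hlt⟩
    · intro h c m
      obtain ⟨k, hk⟩ := exists_nat_ge c
      obtain ⟨n, hn, hlt⟩ := h k m
      exact ⟨n, hn, lt_of_le_of_lt hk hlt⟩
  rw [this]
  exact MeasurableSet.iInter fun k => MeasurableSet.iInter fun m =>
    MeasurableSet.iUnion fun n => MeasurableSet.iUnion fun _ =>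
      measurableSet_lt measurable_const ((F_measurable hT hf n).sub measurable_const)

lemma A_invariant (T : Ω → Ω) (f : Ω → ℝ) (δ : ℝ) (ω : Ω) :
    T ω ∈ A T f δ ↔ ω ∈ A T f δ := by
  constructor
  · intro h c m
    obtain ⟨n, hn, hlt⟩ := h (c - f ω + δ) m
    refine ⟨n + 1, hn.trans (Nat.le_succ n), ?_⟩
    have hF := F_succ T f n ω
    push_cast
    linarith
  · intro h c m
    obtain ⟨n, hn, hlt⟩ := h (c + f ω - δ) (m + 1)
    obtain ⟨k, rfl⟩ : ∃ k, n = k + 1 :=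
      ⟨n - 1, (Nat.succ_pred_eq_of_pos (lt_of_lt_of_le (Nat.succ_pos m) hn)).symm⟩
    refine ⟨k, Nat.succ_le_succ_iff.mp hn, ?_⟩
    have hF := F_succ T f k ω
    push_cast at hlt ⊢
    linarith

lemma A_invariant_iter (T : Ω → Ω) (f : Ω → ℝ) (δ : ℝ) (j : ℕ) (ω : Ω) :
    T^[j] ω ∈ A T f δ ↔ ω ∈ A T f δ := by
  induction j generalizing ω with
  | zero => rfl
  | succ j ih =>
    rw [Function.iterate_succ_apply]
    rw [ih (T ω)]
    exact A_invariant T f δ ω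

lemma F_indicator (T : Ω → Ω) (f : Ω → ℝ) (δ : ℝ) (k : ℕ) (ω : Ω) :
    F T ((A T f δ).indicator (fun x => f x - δ)) k ω
      = if ω ∈ A T f δ then F T f k ω - δ * k else 0 := by
  unfold F
  by_cases h : ω ∈ A T f δ
  · rw [if_pos h]
    have : ∀ j ∈ Finset.range k,
        (A T f δ).indicator (fun x => f x - δ) (T^[j] ω) = f (T^[j] ω) - δ := by
      intro j _
      exact Set.indicator_of_mem ((A_invariant_iter T f δ j ω).mpr h) _
    rw [Finset.sum_congr rfl this, Finset.sum_sub_distrib, Finset.sum_const, Finset.card_range]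
    simp [nsmul_eq_mul, mul_comm]
  · rw [if_neg h]
    have : ∀ j ∈ Finset.range k,
        (A T f δ).indicator (fun x => f x - δ) (T^[j] ω) = 0 := by
      intro j _
      exact Set.indicator_of_notMem (fun hj => h ((A_invariant_iter T f δ j ω).mp hj)) _
    rw [Finset.sum_congr rfl this, Finset.sum_const_zero]

/-- Hopf applied to the invariant set: `δ μ(A) ≤ ∫_A f`. -/
lemma measure_A_le {μ : Measure Ω} [IsProbabilityMeasure μ] {T : Ω → Ω}
    (hT : MeasurePreserving T μ μ) {f : Ω → ℝ} (hfm : Measurable f) (hf : Integrable f μ)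
    {δ : ℝ} (hδ : 0 < δ) :
    δ * (μ (A T f δ)).toReal ≤ ∫ ω in A T f δ, f ω ∂μ := by
  set As := A T f δ with hAs
  have hA : MeasurableSet As := A_measurable hT.measurable hfm δ
  set g : Ω → ℝ := As.indicator (fun x => f x - δ) with hg
  have hgm : Measurable g := (hfm.sub measurable_const).indicator hA
  have hgi : Integrable g μ := (hf.sub (integrable_const δ)).indicator hA
  set E : ℕ → Set Ω := fun N => {ω | 0 < M T g N ω} with hE
  have hEm : ∀ N, MeasurableSet (E N) := fun N =>
    measurableSet_lt measurable_const (M_measurable hT.measurable hgm N)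
  have hmono : Monotone E := by
    apply monotone_nat_of_le_succ
    intro N ω hω
    exact lt_of_lt_of_le hω (M_mono T g N ω)
  have hM_zero : ∀ N ω, ω ∉ As → M T g N ω = 0 := by
    intro N ω hω
    induction N with
    | zero => rfl
    | succ N ih =>
      show max _ _ = 0
      rw [ih, F_indicator, if_neg hω, max_self]
  have hUnion : ⋃ N, E N = As := by
    ext ω
    simp only [Set.mem_iUnion, hE, Set.mem_setOf_eq]
    constructor
    · rintro ⟨N, hN⟩
      by_contra hω
      rw [hM_zero N ω hω] at hN
      exact lt_irrefl 0 hN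
    · intro hω
      obtain ⟨n, hn1, hlt⟩ := hω 0 1
      refine ⟨n, lt_of_lt_of_le ?_ (F_le_M T g le_rfl ω)⟩
      rw [F_indicator, if_pos hω]
      exact hlt
  have hTendsto := tendsto_setIntegral_of_monotone hEm hmono
    (hUnion ▸ hgi.integrableOn : IntegrableOn g (⋃ N, E N) μ)
  have h0 : 0 ≤ ∫ ω in ⋃ N, E N, g ω ∂μ :=
    ge_of_tendsto' hTendsto fun N => hopf hT hgm hgi N
  rw [hUnion] at h0
  have hcongr : ∫ ω in As, g ω ∂μ = ∫ ω in As, (f ω - δ) ∂μ := by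
    apply setIntegral_congr_fun hA
    intro ω hω
    exact Set.indicator_of_mem hω _
  rw [hcongr, integral_sub hf.integrableOn (integrableOn_const (measure_ne_top μ As))] at h0
  rw [setIntegral_const] at h0
  have := h0
  simp only [smul_eq_mul, measureReal_def] at this
  linarith [this]


/-! ### Tightness side -/

/-- Vanishing tails of an integrable function. -/
lemma tail_small {μ : Measure Ω} {f : Ω → ℝ} (hfm : Measurable f)
    (hf : Integrable f μ) {ε : ℝ} (hε : 0 < ε) :
    ∃ k : ℕ, ∫ ω, ({x | (k : ℝ) ≤ |f x|}.indicator (fun x => |f x|)) ω ∂μ ≤ ε := by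
  set v : ℕ → Ω → ℝ := fun k => {x | (k : ℝ) ≤ |f x|}.indicator (fun x => |f x|) with hv
  have hmeas : ∀ k : ℕ, MeasurableSet {x | (k : ℝ) ≤ |f x|} := fun k =>
    measurableSet_le measurable_const hfm.abs
  have htend : Tendsto (fun k => ∫ ω, v k ω ∂μ) atTop (nhds (∫ _ω, (0 : ℝ) ∂μ)) := by
    apply tendsto_integral_of_dominated_convergence (fun ω => |f ω|)
    · exact fun k => (hfm.abs.indicator (hmeas k)).aestronglyMeasurable
    · exact hf.abs
    · intro k
      filter_upwards with ω
      rw [Real.norm_eq_abs]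
      by_cases h : ω ∈ {x | (k : ℝ) ≤ |f x|}
      · rw [hv]; simp only [Set.indicator_of_mem h]; rw [abs_abs]
      · rw [hv]; simp only [Set.indicator_of_notMem h]; simp [abs_nonneg]
    · filter_upwards with ω
      apply tendsto_const_nhds.congr'
      filter_upwards [eventually_gt_atTop ⌈|f ω|⌉₊] with k hk
      have : ω ∉ {x | (k : ℝ) ≤ |f x|} := by
        simp only [Set.mem_setOf_eq, not_le]
        exact lt_of_le_of_lt (Nat.le_ceil _) (by exact_mod_cast hk)
      rw [hv]; simp [Set.indicator_of_notMem this]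
  rw [integral_zero] at htend
  exact (htend.eventually (eventually_le_nhds hε)).exists


lemma setIntegral_comp_iter_inv {μ : Measure Ω} [IsProbabilityMeasure μ] {T : Ω → Ω}
    (hT : MeasurePreserving T μ μ) {f : Ω → ℝ} (hf : Integrable f μ) {As : Set Ω}
    (hA : MeasurableSet As) (hinv : ∀ j ω, T^[j] ω ∈ As ↔ ω ∈ As) (j : ℕ) :
    ∫ ω in As, f (T^[j] ω) ∂μ = ∫ ω in As, f ω ∂μ := by
  rw [← integral_indicator hA, ← integral_indicator hA]
  have heq : As.indicator (fun ω => f (T^[j] ω)) = fun ω => As.indicator f (T^[j] ω) := by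
    funext ω
    by_cases h : ω ∈ As
    · rw [Set.indicator_of_mem h, Set.indicator_of_mem ((hinv j ω).mpr h)]
    · rw [Set.indicator_of_notMem h, Set.indicator_of_notMem (fun hc => h ((hinv j ω).mp hc))]
  rw [heq]
  exact integral_comp_iter hT (hf.indicator hA).aestronglyMeasurable j

lemma setIntegral_F_inv {μ : Measure Ω} [IsProbabilityMeasure μ] {T : Ω → Ω}
    (hT : MeasurePreserving T μ μ) {f : Ω → ℝ} (hf : Integrable f μ) {As : Set Ω}
    (hA : MeasurableSet As) (hinv : ∀ j ω, T^[j] ω ∈ As ↔ ω ∈ As) (n : ℕ) :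
    ∫ ω in As, F T f n ω ∂μ = n * ∫ ω in As, f ω ∂μ := by
  unfold F
  rw [integral_finset_sum _ fun j _ => (integrable_comp_iter hT hf j).integrableOn]
  rw [Finset.sum_congr rfl fun j _ => setIntegral_comp_iter_inv hT hf hA hinv j]
  simp [Finset.sum_const, Finset.card_range, nsmul_eq_mul]

lemma setIntegral_f_nonpos {μ : Measure Ω} [IsProbabilityMeasure μ] {T : Ω → Ω}
    (hT : MeasurePreserving T μ μ) {f : Ω → ℝ} (hfm : Measurable f) (hf : Integrable f μ)
    (htight : ∀ ε > (0 : ℝ), ∃ M > (0 : ℝ), ∀ n : ℕ,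
      μ {ω | M ≤ |F T f n ω|} ≤ ENNReal.ofReal ε)
    {As : Set Ω} (hA : MeasurableSet As) (hinv : ∀ j ω, T^[j] ω ∈ As ↔ ω ∈ As) :
    ∫ ω in As, f ω ∂μ ≤ 0 := by
  set I := ∫ ω in As, f ω ∂μ with hI
  suffices h : ∀ ε > (0 : ℝ), I ≤ ε by
    by_contra hpos
    push_neg at hpos
    linarith [h (I / 2) (by linarith)]
  intro ε hε
  obtain ⟨k, hk⟩ := tail_small hfm hf (show (0:ℝ) < ε/3 by linarith)
  set v : Ω → ℝ := {x | (k : ℝ) ≤ |f x|}.indicator (fun x => |f x|) with hv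
  have hsetm : MeasurableSet {x | (k : ℝ) ≤ |f x|} := measurableSet_le measurable_const hfm.abs
  have hvint : Integrable v μ := hf.abs.indicator hsetm
  have hvnonneg : ∀ x, 0 ≤ v x := fun x => Set.indicator_nonneg (fun y _ => abs_nonneg _) x
  have hfv : ∀ x, |f x| ≤ (k : ℝ) + v x := by
    intro x
    by_cases h : x ∈ {x | (k : ℝ) ≤ |f x|}
    · rw [hv, Set.indicator_of_mem h]
      have : (0:ℝ) ≤ k := Nat.cast_nonneg k
      linarith
    · rw [hv, Set.indicator_of_notMem h]
      simp only [Set.mem_setOf_eq, not_le] at h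
      linarith
  set ε' := ε / (3 * ((k : ℝ) + 1)) with hε'
  have hε'pos : 0 < ε' := by positivity
  obtain ⟨Mc, hMc, htt⟩ := htight ε' hε'pos
  have hkε' : (k : ℝ) * ε' ≤ ε / 3 := by
    rw [hε']
    have hD : (0:ℝ) < 3 * ((k:ℝ) + 1) := by positivity
    rw [mul_comm, div_mul_eq_mul_div, div_le_div_iff₀ hD (by norm_num : (0:ℝ) < 3)]
    nlinarith [Nat.cast_nonneg (α := ℝ) k, hε.le]
  have key : ∀ n : ℕ, 1 ≤ n → (n : ℝ) * I ≤ Mc + n * (2 * ε / 3) := by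
    intro n hn
    set B := {ω | Mc ≤ |F T f n ω|} with hB
    have hBmeas : MeasurableSet B :=
      measurableSet_le measurable_const (F_measurable hT.measurable hfm n).abs
    have hμB : (μ B).toReal ≤ ε' := by
      have h1 : (μ B).toReal ≤ (ENNReal.ofReal ε').toReal :=
        ENNReal.toReal_mono ENNReal.ofReal_ne_top (htt n)
      rwa [ENNReal.toReal_ofReal hε'pos.le] at h1
    set S : Ω → ℝ := fun ω => ∑ j ∈ Finset.range n, |f (T^[j] ω)| with hS
    have hSint : Integrable S μ := integrable_finset_sum _ fun j _ =>
      (((hT.iterate j).integrable_comp hf.aestronglyMeasurable).mpr hf).abs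
    have hSnonneg : ∀ ω, 0 ≤ S ω := fun ω => Finset.sum_nonneg fun j _ => abs_nonneg _
    have hGint : Integrable (fun ω => Mc + B.indicator S ω) μ :=
      (integrable_const Mc).add (hSint.indicator hBmeas)
    have hpt : ∀ ω, F T f n ω ≤ Mc + B.indicator S ω := by
      intro ω
      by_cases h : ω ∈ B
      · rw [Set.indicator_of_mem h]
        have h1 : F T f n ω ≤ S ω :=
          le_trans (le_abs_self _) (Finset.abs_sum_le_sum_abs _ _)
        linarith
      · rw [Set.indicator_of_notMem h]
        simp only [hB, Set.mem_setOf_eq, not_le] at h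
        have := le_abs_self (F T f n ω)
        linarith
    have c1 : ∫ ω in As, F T f n ω ∂μ = n * I := setIntegral_F_inv hT hf hA hinv n
    have c2 : ∫ ω in As, F T f n ω ∂μ ≤ ∫ ω in As, (Mc + B.indicator S ω) ∂μ :=
      setIntegral_mono_on (F_integrable hT hf n).integrableOn hGint.integrableOn hA
        fun ω _ => hpt ω
    have c3 : ∫ ω in As, (Mc + B.indicator S ω) ∂μ ≤ ∫ ω, (Mc + B.indicator S ω) ∂μ := by
      apply setIntegral_le_integral hGint
      filter_upwards with ω
      simp only [Pi.zero_apply]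
      have h1 : 0 ≤ B.indicator S ω := Set.indicator_nonneg (fun y _ => hSnonneg y) ω
      linarith
    have c4 : ∫ ω, (Mc + B.indicator S ω) ∂μ = Mc + ∫ ω in B, S ω ∂μ := by
      rw [integral_add (integrable_const Mc) (hSint.indicator hBmeas), integral_const,
        integral_indicator hBmeas]
      simp
    have c5 : ∫ ω in B, S ω ∂μ ≤ n * ((k : ℝ) * ε' + ε / 3) := by
      rw [hS]
      rw [integral_finset_sum _ fun j _ => ((integrable_comp_iter hT hf j).abs).integrableOn]
      have hterm : ∀ j ∈ Finset.range n,
          ∫ ω in B, |f (T^[j] ω)| ∂μ ≤ (k : ℝ) * ε' + ε / 3 := by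
        intro j _
        have hcompint : Integrable (fun ω => v (T^[j] ω)) μ := integrable_comp_iter hT hvint j
        have p1 : ∫ ω in B, |f (T^[j] ω)| ∂μ ≤ ∫ ω in B, ((k : ℝ) + v (T^[j] ω)) ∂μ :=
          setIntegral_mono_on
            ((integrable_comp_iter hT hf j).abs).integrableOn
            ((integrable_const _).add hcompint).integrableOn hBmeas
            fun ω _ => hfv (T^[j] ω)
        have p2 : ∫ ω in B, ((k : ℝ) + v (T^[j] ω)) ∂μ
            = (k : ℝ) * (μ B).toReal + ∫ ω in B, v (T^[j] ω) ∂μ := by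
          rw [integral_add (integrableOn_const (C := (k : ℝ)) (measure_ne_top μ B))
            hcompint.integrableOn, setIntegral_const]
          simp [smul_eq_mul, mul_comm, measureReal_def]
        have p3 : ∫ ω in B, v (T^[j] ω) ∂μ ≤ ∫ ω, v (T^[j] ω) ∂μ := by
          apply setIntegral_le_integral hcompint
          filter_upwards with ω using hvnonneg _
        have p4 : ∫ ω, v (T^[j] ω) ∂μ = ∫ ω, v ω ∂μ :=
          integral_comp_iter hT hvint.aestronglyMeasurable j
        have p5 : (k : ℝ) * (μ B).toReal ≤ (k : ℝ) * ε' :=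
          mul_le_mul_of_nonneg_left hμB (Nat.cast_nonneg k)
        linarith [hk]
      calc ∑ j ∈ Finset.range n, ∫ ω in B, |f (T^[j] ω)| ∂μ
          ≤ ∑ _j ∈ Finset.range n, ((k : ℝ) * ε' + ε / 3) := Finset.sum_le_sum hterm
        _ = n * ((k : ℝ) * ε' + ε / 3) := by
            rw [Finset.sum_const, Finset.card_range, nsmul_eq_mul]
    have : (k : ℝ) * ε' + ε / 3 ≤ 2 * ε / 3 := by linarith
    have hnn : (0:ℝ) ≤ (n:ℝ) := Nat.cast_nonneg n
    nlinarith [c1, c2, c3, c4, c5]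
  -- choose n large
  set n := max 1 ⌈Mc / (ε / 3)⌉₊ with hn
  have hn1 : 1 ≤ n := le_max_left _ _
  have hn2 : Mc / (ε / 3) ≤ (n : ℝ) := by
    calc Mc / (ε / 3) ≤ (⌈Mc / (ε / 3)⌉₊ : ℝ) := Nat.le_ceil _
      _ ≤ (n : ℝ) := by exact_mod_cast le_max_right _ _
  have hMn : Mc ≤ (n : ℝ) * (ε / 3) := by
    rw [div_le_iff₀ (by linarith : (0:ℝ) < ε / 3)] at hn2
    linarith
  have hk2 := key n hn1
  have hnpos : (0:ℝ) < (n:ℝ) := by exact_mod_cast hn1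
  have : (n : ℝ) * I ≤ (n : ℝ) * ε := by nlinarith
  exact le_of_mul_le_mul_left (by linarith) hnpos


lemma measure_A_zero {μ : Measure Ω} [IsProbabilityMeasure μ] {T : Ω → Ω}
    (hT : MeasurePreserving T μ μ) {f : Ω → ℝ} (hfm : Measurable f) (hf : Integrable f μ)
    (htight : ∀ ε > (0 : ℝ), ∃ M > (0 : ℝ), ∀ n : ℕ,
      μ {ω | M ≤ |F T f n ω|} ≤ ENNReal.ofReal ε)
    {δ : ℝ} (hδ : 0 < δ) : μ (A T f δ) = 0 := by
  have h1 := measure_A_le hT hfm hf hδ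
  have h2 := setIntegral_f_nonpos hT hfm hf htight (A_measurable hT.measurable hfm δ)
    (A_invariant_iter T f δ)
  have h3 : (μ (A T f δ)).toReal ≤ 0 := by nlinarith
  have h4 : (μ (A T f δ)).toReal = 0 := le_antisymm h3 ENNReal.toReal_nonneg
  exact ((ENNReal.toReal_eq_zero_iff _).mp h4).resolve_right (measure_ne_top μ _)

lemma one_sided {μ : Measure Ω} [IsProbabilityMeasure μ] {T : Ω → Ω}
    (hT : MeasurePreserving T μ μ) {f : Ω → ℝ} (hfm : Measurable f) (hf : Integrable f μ)
    (htight : ∀ ε > (0 : ℝ), ∃ M > (0 : ℝ), ∀ n : ℕ,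
      μ {ω | M ≤ |F T f n ω|} ≤ ENNReal.ofReal ε)
    (δ' : ℝ) (hδ' : 0 < δ') :
    ∀ᵐ ω ∂μ, ∀ᶠ n in atTop, F T f n ω ≤ δ' * n := by
  have hz := measure_A_zero hT hfm hf htight (show (0:ℝ) < δ'/2 by linarith)
  have hae : ∀ᵐ ω ∂μ, ω ∉ A T f (δ'/2) := by
    rw [ae_iff]
    simpa using hz
  filter_upwards [hae] with ω hω
  rw [A, Set.mem_setOf_eq] at hω
  push_neg at hω
  obtain ⟨c, m, hc⟩ := hω
  filter_upwards [eventually_ge_atTop m, eventually_ge_atTop ⌈c / (δ'/2)⌉₊] with n hn1 hn2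
  have hcn : c ≤ δ'/2 * n := by
    have h1 : c / (δ'/2) ≤ (n : ℝ) := le_trans (Nat.le_ceil _) (by exact_mod_cast hn2)
    rw [div_le_iff₀ (by linarith : (0:ℝ) < δ'/2)] at h1
    linarith
  have h2 := hc n hn1
  linarith

lemma main_measurable {μ : Measure Ω} [IsProbabilityMeasure μ] {T : Ω → Ω}
    (hT : MeasurePreserving T μ μ) {f : Ω → ℝ} (hfm : Measurable f) (hf : Integrable f μ)
    (htight : ∀ ε > (0 : ℝ), ∃ M > (0 : ℝ), ∀ n : ℕ,
      μ {ω | M ≤ |F T f n ω|} ≤ ENNReal.ofReal ε) :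
    ∀ᵐ ω ∂μ, Tendsto (fun n : ℕ => F T f n ω / (n : ℝ)) atTop (nhds 0) := by
  have hFneg : ∀ n ω, F T (-f) n ω = - F T f n ω := by
    intro n ω
    unfold F
    simp
  have hneg_tight : ∀ ε > (0 : ℝ), ∃ M > (0 : ℝ), ∀ n : ℕ,
      μ {ω | M ≤ |F T (-f) n ω|} ≤ ENNReal.ofReal ε := by
    intro ε hε
    obtain ⟨M, hM, h⟩ := htight ε hε
    refine ⟨M, hM, fun n => ?_⟩
    have hset : {ω | M ≤ |F T (-f) n ω|} = {ω | M ≤ |F T f n ω|} := by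
      ext ω
      rw [Set.mem_setOf_eq, Set.mem_setOf_eq, hFneg, abs_neg]
    rw [hset]
    exact h n
  have h1 : ∀ᵐ ω ∂μ, ∀ k : ℕ, ∀ᶠ n in atTop, F T f n ω ≤ (1 / ((k:ℝ)+1)) * n :=
    ae_all_iff.mpr fun k => one_sided hT hfm hf htight _ (by positivity)
  have h2 : ∀ᵐ ω ∂μ, ∀ k : ℕ, ∀ᶠ n in atTop, F T (-f) n ω ≤ (1 / ((k:ℝ)+1)) * n :=
    ae_all_iff.mpr fun k => one_sided hT hfm.neg hf.neg hneg_tight _ (by positivity)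
  filter_upwards [h1, h2] with ω hω1 hω2
  rw [NormedAddCommGroup.tendsto_nhds_zero]
  intro ε hε
  obtain ⟨k, hk⟩ := exists_nat_one_div_lt hε
  filter_upwards [hω1 k, hω2 k, eventually_ge_atTop 1] with n hn1 hn2 hn3
  rw [hFneg] at hn2
  have hnpos : (0:ℝ) < (n : ℝ) := by exact_mod_cast hn3
  have habs : |F T f n ω| ≤ (1 / ((k:ℝ)+1)) * n := abs_le.mpr ⟨by linarith, hn1⟩
  rw [Real.norm_eq_abs, abs_div, abs_of_pos hnpos, div_lt_iff₀ hnpos]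
  have hk' : (1 : ℝ) / ((k:ℝ)+1) < ε := by exact_mod_cast hk
  nlinarith

end TightCocycle

open TightCocycle in
/-- Tight cocycle sums imply Fₙ/n → 0 almost everywhere. -/
theorem tight_cocycle_cesaro_zero {Ω : Type*} [MeasurableSpace Ω]
    (μ : Measure Ω) [IsProbabilityMeasure μ]
    (T : Ω → Ω) (hT : MeasurePreserving T μ μ)
    (f : Ω → ℝ) (hf : Integrable f μ)
    (htight : ∀ ε > (0 : ℝ), ∃ M > (0 : ℝ), ∀ n : ℕ,
      μ {ω | M ≤ |∑ j ∈ Finset.range n, f (T^[j] ω)|} ≤ ENNReal.ofReal ε) :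
    ∀ᵐ ω ∂μ, Tendsto
      (fun n : ℕ => (∑ j ∈ Finset.range n, f (T^[j] ω)) / (n : ℝ))
      atTop (nhds 0) := by
  set g := hf.1.mk f with hgdef
  have hgm : Measurable g := hf.1.stronglyMeasurable_mk.measurable
  have hfg : f =ᵐ[μ] g := hf.1.ae_eq_mk
  have hgi : Integrable g μ := hf.congr hfg
  have hiter : ∀ᵐ ω ∂μ, ∀ j : ℕ, f (T^[j] ω) = g (T^[j] ω) := by
    rw [ae_all_iff]
    intro j
    exact MeasureTheory.ae_eq_comp (hT.iterate j).measurable.aemeasurable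
      (by rwa [(hT.iterate j).map_eq])
  have hsums : ∀ᵐ ω ∂μ, ∀ n : ℕ, F T f n ω = F T g n ω := by
    filter_upwards [hiter] with ω hω n
    exact Finset.sum_congr rfl fun j _ => hω j
  have hgtight : ∀ ε > (0 : ℝ), ∃ M > (0 : ℝ), ∀ n : ℕ,
      μ {ω | M ≤ |F T g n ω|} ≤ ENNReal.ofReal ε := by
    intro ε hε
    obtain ⟨M, hM, h⟩ := htight ε hε
    refine ⟨M, hM, fun n => ?_⟩
    have hsetseq : {ω | M ≤ |F T g n ω|} =ᵐ[μ] {ω | M ≤ |F T f n ω|} := by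
      rw [Filter.eventuallyEq_set]
      filter_upwards [hsums] with ω hω
      rw [hω n]
    rw [measure_congr hsetseq]
    exact h n
  have hmain := main_measurable hT hgm hgi hgtight
  filter_upwards [hmain, hsums] with ω hω hsum
  have heq : (fun n : ℕ => (∑ j ∈ Finset.range n, f (T^[j] ω)) / (n : ℝ))
      = fun n : ℕ => F T g n ω / (n : ℝ) := by
    funext n
    rw [← hsum n]
    rfl
  rw [heq]
  exact hω
end

section
/- Let (qₖ)_{k∈ℤ} be a stationary integer-valued sequence (a shift-invariant probability measure on ℤ^ℤ) with q₀ ∈ L², mean ρ = E[q₀], and suppose the centered partial sums Sₙ − ρn (where Sₙ = Σ_{k=1}^{n} qₖ) have uniformly bounded second moments. If ρ ∉ ℤ, then the shift on ℤ^ℤ with this measure is not mixing. -/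
open MeasureTheory Filter

/-- The shift on integer charge configurations. -/
def intShift : (ℤ → ℤ) → (ℤ → ℤ) := fun ω k => ω (k + 1)

section Aux

/-- Abstract Hilbert space lemma: if a bounded sequence `a` has `V (a N) → f` for a continuous
linear map `V`, then `f` is in the range of `V`. -/
lemma exists_preimage_of_bounded_approx
    {H : Type*} [NormedAddCommGroup H] [InnerProductSpace ℝ H] [CompleteSpace H]
    (V : H →ₗ[ℝ] H) (hV : Continuous V)
    (a : ℕ → H) (C : ℝ) (hC : ∀ N, ‖a N‖ ≤ C)
    (f : H) (hf : Filter.Tendsto (fun N => V (a N)) atTop (nhds f)) :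
    ∃ g : H, V g = f := by
  set D : ℕ → Set H := fun M => closure (convexHull ℝ (a '' Set.Ici M)) with hD
  have Dconv : ∀ M, Convex ℝ (D M) := fun M => (convex_convexHull ℝ _).closure
  have Dclosed : ∀ M, IsClosed (D M) := fun M => isClosed_closure
  have DaM : ∀ M, a M ∈ D M := fun M =>
    subset_closure (subset_convexHull ℝ _ ⟨M, Set.self_mem_Ici, rfl⟩)
  have Dmono : ∀ {M M'}, M ≤ M' → D M' ⊆ D M := fun {M M'} h =>
    closure_mono (convexHull_mono (Set.image_mono (Set.Ici_subset_Ici.2 h)))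
  have Dsub : ∀ (M : ℕ) (S : Set H), Convex ℝ S → IsClosed S →
      (∀ N, M ≤ N → a N ∈ S) → D M ⊆ S := by
    intro M S hSc hScl hmem
    exact closure_minimal (convexHull_min (by rintro x ⟨N, hN, rfl⟩; exact hmem N hN) hSc) hScl
  have Dbound : ∀ M, ∀ x ∈ D M, ‖x‖ ≤ C := by
    intro M x hx
    have := Dsub M (Metric.closedBall 0 C) (convex_closedBall 0 C) Metric.isClosed_closedBall
      (fun N _ => by simpa [Metric.mem_closedBall, dist_zero_right] using hC N) hx
    simpa [Metric.mem_closedBall, dist_zero_right] using this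
  have Dapprox : ∀ ε : ℝ, 0 < ε → ∃ M, ∀ x ∈ D M, ‖V x - f‖ ≤ ε := by
    intro ε hε
    obtain ⟨M, hM⟩ := (Metric.tendsto_atTop.1 hf) ε hε
    refine ⟨M, fun x hx => ?_⟩
    have : D M ⊆ V ⁻¹' Metric.closedBall f ε := by
      refine Dsub M _ ((convex_closedBall f ε).linear_preimage V)
        (Metric.isClosed_closedBall.preimage hV) (fun N hN => ?_)
      simpa [Metric.mem_closedBall, dist_eq_norm] using (hM N hN).le
    simpa [Metric.mem_closedBall, dist_eq_norm] using this hx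
  have hmin : ∀ M : ℕ, ∃ v, v ∈ D M ∧ ∀ x ∈ D M, ‖v‖ ≤ ‖x‖ := by
    intro M
    obtain ⟨v, hv, hveq⟩ := exists_norm_eq_iInf_of_complete_convex ⟨a M, DaM M⟩
      ((Dclosed M).isComplete) (Dconv M) 0
    refine ⟨v, hv, fun x hx => ?_⟩
    have h1 : ‖v‖ = ⨅ w : D M, ‖(0 : H) - w‖ := by simpa using hveq
    have h2 : (⨅ w : D M, ‖(0 : H) - w‖) ≤ ‖(0 : H) - x‖ :=
      ciInf_le ⟨0, fun r ⟨w, hw⟩ => hw ▸ norm_nonneg _⟩ (⟨x, hx⟩ : D M)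
    rw [h1]
    simpa using h2
  choose g hgmem hgmin using hmin
  set d : ℕ → ℝ := fun M => ‖g M‖ with hd
  have dmono : Monotone d := fun M M' h => hgmin M (g M') (Dmono h (hgmem M'))
  have dbdd : ∀ M, d M ≤ C := fun M => Dbound M _ (hgmem M)
  set s : ℝ := ⨆ M, d M with hs
  have hdbdd : BddAbove (Set.range d) := ⟨C, by rintro r ⟨M, rfl⟩; exact dbdd M⟩
  have hds : ∀ M, d M ≤ s := fun M => le_ciSup hdbdd M
  have hdtend : Filter.Tendsto d atTop (nhds s) := tendsto_atTop_ciSup dmono hdbdd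
  have key : ∀ {M M'}, M ≤ M' → ‖g M - g M'‖ ^ 2 ≤ 2 * s ^ 2 - 2 * d M ^ 2 := by
    intro M M' h
    have hmid : (2⁻¹ : ℝ) • (g M) + (2⁻¹ : ℝ) • (g M') ∈ D M :=
      (Dconv M) (hgmem M) (Dmono h (hgmem M')) (by norm_num) (by norm_num) (by norm_num)
    have hmidnorm : d M ≤ ‖(2⁻¹ : ℝ) • (g M) + (2⁻¹ : ℝ) • (g M')‖ := hgmin M _ hmid
    have hpar : ‖g M + g M'‖ ^ 2 + ‖g M - g M'‖ ^ 2 = 2 * (‖g M‖ ^ 2 + ‖g M'‖ ^ 2) := by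
      have := parallelogram_law_with_norm ℝ (g M) (g M')
      ring_nf
      ring_nf at this
      linarith [this]
    have hsum : 2 * d M ≤ ‖g M + g M'‖ := by
      have : ‖(2⁻¹ : ℝ) • (g M) + (2⁻¹ : ℝ) • (g M')‖ = 2⁻¹ * ‖g M + g M'‖ := by
        rw [← smul_add, norm_smul]
        norm_num
      rw [this] at hmidnorm
      linarith
    have hdnn : 0 ≤ d M := norm_nonneg _
    have hsq : (2 * d M) ^ 2 ≤ ‖g M + g M'‖ ^ 2 :=
      pow_le_pow_left₀ (by linarith) hsum 2
    have hM' : d M' ≤ s := hds M'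
    have hM'nn : 0 ≤ d M' := norm_nonneg _
    have : d M' ^ 2 ≤ s ^ 2 := pow_le_pow_left₀ hM'nn hM' 2
    nlinarith [hpar, hsq]
  have hcauchy : CauchySeq g := by
    rw [Metric.cauchySeq_iff]
    intro ε hε
    have hsq : Filter.Tendsto (fun M => 2 * s ^ 2 - 2 * d M ^ 2) atTop (nhds 0) := by
      have := hdtend.pow 2
      have h2 : Filter.Tendsto (fun M => 2 * s ^ 2 - 2 * d M ^ 2) atTop
          (nhds (2 * s ^ 2 - 2 * s ^ 2)) :=
        (tendsto_const_nhds.sub (this.const_mul 2)).congr (fun M => by ring)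
      simpa using h2
    obtain ⟨N, hN⟩ := (Metric.tendsto_atTop.1 hsq) (ε ^ 2) (by positivity)
    refine ⟨N, fun m hm n hn => ?_⟩
    have main : ∀ {m n}, N ≤ m → m ≤ n → dist (g m) (g n) < ε := by
      intro m n hm hmn
      have h1 : ‖g m - g n‖ ^ 2 ≤ 2 * s ^ 2 - 2 * d m ^ 2 := key hmn
      have h2 : |2 * s ^ 2 - 2 * d m ^ 2| < ε ^ 2 := by
        simpa [Real.dist_eq] using hN m hm
      have h3 : ‖g m - g n‖ ^ 2 < ε ^ 2 := lt_of_le_of_lt h1 (lt_of_le_of_lt (le_abs_self _) h2)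
      have := lt_of_pow_lt_pow_left₀ 2 hε.le h3
      simpa [dist_eq_norm] using this
    rcases le_total m n with h | h
    · exact main hm h
    · rw [dist_comm]; exact main hn h
  obtain ⟨G, hG⟩ := cauchySeq_tendsto_of_complete hcauchy
  have hGmem : ∀ M, G ∈ D M := by
    intro M
    refine (Dclosed M).mem_of_tendsto hG ?_
    filter_upwards [eventually_ge_atTop M] with M' hM'
    exact Dmono hM' (hgmem M')
  refine ⟨G, ?_⟩
  have hle : ∀ ε : ℝ, 0 < ε → ‖V G - f‖ ≤ ε := by
    intro ε hε
    obtain ⟨M, hM⟩ := Dapprox ε hε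
    exact hM G (hGmem M)
  by_contra hne
  have hpos : 0 < ‖V G - f‖ := by
    rw [norm_pos_iff, sub_ne_zero]
    exact fun h => hne (by simpa [sub_eq_zero] using h)
  have := hle (‖V G - f‖ / 2) (by linarith)
  linarith

lemma intShift_iterate (n : ℕ) (ω : ℤ → ℤ) (j : ℤ) : (intShift^[n] ω) j = ω (j + n) := by
  induction n generalizing ω j with
  | zero => simp
  | succ m ih =>
      rw [Function.iterate_succ_apply, ih]
      show ω (j + (m : ℤ) + 1) = ω (j + ((m + 1 : ℕ) : ℤ))
      congr 1
      push_cast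
      ring

lemma sum_shift_Icc (f : ℤ → ℝ) (n : ℕ) :
    ∑ k ∈ Finset.Icc 1 n, f ((k : ℤ) + 1) = (∑ k ∈ Finset.Icc 1 (n + 1), f (k : ℤ)) - f 1 := by
  induction n with
  | zero => simp
  | succ m ih =>
      rw [Finset.sum_Icc_succ_top (by omega : 1 ≤ m + 1),
        Finset.sum_Icc_succ_top (by omega : 1 ≤ m + 1 + 1), ih]
      push_cast
      ring

end Aux

set_option maxHeartbeats 1000000 in
/-- A stationary integer-valued sequence with q₀ ∈ L², mean ρ ∉ ℤ, and uniformly bounded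
second moments of the centered partial sums, is not mixing under the shift. -/
theorem lattice_charges_bounded_fluctuations_not_mixing
    (μ : Measure (ℤ → ℤ)) [IsProbabilityMeasure μ]
    (hshift : MeasurePreserving intShift μ μ)
    (hL2 : MemLp (fun ω : ℤ → ℤ => ((ω 0 : ℤ) : ℝ)) 2 μ)
    (ρ : ℝ) (hρ : ρ = ∫ ω, ((ω 0 : ℤ) : ℝ) ∂μ)
    (K : ℝ)
    (hK : ∀ n : ℕ,
      ∫ ω, ((∑ k ∈ Finset.Icc 1 n, ((ω (k : ℤ) : ℤ) : ℝ)) - ρ * n) ^ 2 ∂μ ≤ K)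
    (hρZ : ¬ ∃ m : ℤ, ρ = (m : ℝ)) :
    ¬ ∀ (F G : (ℤ → ℤ) → ℝ), Measurable F → Measurable G →
        (∃ C : ℝ, ∀ ω, |F ω| ≤ C) → (∃ C : ℝ, ∀ ω, |G ω| ≤ C) →
        Tendsto (fun n : ℕ => ∫ ω, F ω * G (intShift^[n] ω) ∂μ) atTop
          (nhds ((∫ ω, F ω ∂μ) * (∫ ω, G ω ∂μ))) := by
  intro hmix
  haveI : Fact ((1 : ENNReal) ≤ 2) := ⟨one_le_two⟩
  -- the centered partial sum functions
  set Sfun : ℕ → (ℤ → ℤ) → ℝ :=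
    fun n ω => (∑ k ∈ Finset.Icc 1 n, ((ω (k : ℤ) : ℤ) : ℝ)) - ρ * n with hSfun
  have memQ : ∀ k : ℕ, MemLp (fun ω : ℤ → ℤ => ((ω (k : ℤ) : ℤ) : ℝ)) 2 μ := by
    intro k
    have h := hL2.comp_measurePreserving (hshift.iterate k)
    have : ((fun ω : ℤ → ℤ => ((ω 0 : ℤ) : ℝ)) ∘ intShift^[k]) =
        fun ω : ℤ → ℤ => ((ω (k : ℤ) : ℤ) : ℝ) := by
      funext ω
      simp [Function.comp, intShift_iterate]
    rwa [this] at h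
  have memS : ∀ n : ℕ, MemLp (Sfun n) 2 μ := by
    intro n
    exact (memLp_finset_sum _ (fun k _ => memQ k)).sub (memLp_const (ρ * n))
  set s : ℕ → Lp ℝ 2 μ := fun n => (memS n).toLp (Sfun n) with hsdef
  -- Koopman operator
  set U : Lp ℝ 2 μ →ₗ[ℝ] Lp ℝ 2 μ :=
    { toFun := fun g => Lp.compMeasurePreserving intShift hshift g
      map_add' := fun g1 g2 => map_add _ _ _
      map_smul' := by
        intro c g
        refine Lp.ext ?_
        filter_upwards [Lp.coeFn_compMeasurePreserving (c • g) hshift,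
          Lp.coeFn_smul c (Lp.compMeasurePreserving intShift hshift g),
          Lp.coeFn_compMeasurePreserving g hshift,
          hshift.quasiMeasurePreserving.ae_eq_comp (Lp.coeFn_smul c g)] with ω h1 h2 h3 h4
        simp only [RingHom.id_apply]
        rw [h1, h2, h4]
        simp only [Pi.smul_apply, Function.comp_apply]
        rw [h3]
        simp [Function.comp_apply] } with hUdef
  have hUapp : ∀ x : Lp ℝ 2 μ, U x = Lp.compMeasurePreserving intShift hshift x := fun _ => rfl
  have hUcont : Continuous fun x : Lp ℝ 2 μ => U x := by
    simpa [hUapp] using (Lp.isometry_compMeasurePreserving (E := ℝ) (p := 2) hshift).continuous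
  set V : Lp ℝ 2 μ →ₗ[ℝ] Lp ℝ 2 μ := LinearMap.id - U with hVdef
  have hVapp : ∀ x, V x = x - U x := fun x => rfl
  have hVcont : Continuous fun x : Lp ℝ 2 μ => V x := by
    exact (continuous_id.sub hUcont).congr (fun x => (hVapp x).symm)
  -- norms of s n
  have hnormsq : ∀ n, ‖s n‖ ^ 2 = ∫ ω, (Sfun n ω) ^ 2 ∂μ := by
    intro n
    rw [← real_inner_self_eq_norm_sq]
    rw [L2.inner_def]
    refine integral_congr_ae ?_
    filter_upwards [(memS n).coeFn_toLp] with ω h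
    simp only [RCLike.inner_apply, conj_trivial]
    rw [show (s n : (ℤ → ℤ) → ℝ) ω = Sfun n ω from h]
    ring
  have hKnn : 0 ≤ K := le_trans (integral_nonneg (fun ω => sq_nonneg _)) (hK 0)
  have hsnorm : ∀ n, ‖s n‖ ≤ Real.sqrt K := by
    intro n
    have h1 : ‖s n‖ ^ 2 ≤ K := by rw [hnormsq n]; exact hK n
    have := Real.sqrt_le_sqrt h1
    rwa [Real.sqrt_sq (norm_nonneg _)] at this
  -- the key recursion U (s n) = s (n+1) - s 1
  have hUs : ∀ n : ℕ, U (s n) = s (n + 1) - s 1 := by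
    intro n
    rw [hUapp]
    refine Lp.ext ?_
    have hpull := hshift.quasiMeasurePreserving.ae_eq_comp ((memS n).coeFn_toLp)
    filter_upwards [Lp.coeFn_compMeasurePreserving (s n) hshift, hpull,
      Lp.coeFn_sub (s (n + 1)) (s 1), (memS (n + 1)).coeFn_toLp, (memS 1).coeFn_toLp]
      with ω h1 h2 h3 h4 h5
    rw [h1]
    show (⇑(s n) ∘ intShift) ω = _
    rw [h2, h3]
    simp only [Pi.sub_apply]
    rw [h4, h5]
    show Sfun n (intShift ω) = Sfun (n + 1) ω - Sfun 1 ω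
    simp only [hSfun]
    have : ∑ k ∈ Finset.Icc 1 n, ((intShift ω) (k : ℤ) : ℝ) =
        ∑ k ∈ Finset.Icc 1 n, ((ω ((k : ℤ) + 1) : ℤ) : ℝ) := by
      refine Finset.sum_congr rfl (fun k _ => ?_)
      rfl
    rw [this, sum_shift_Icc (fun j => ((ω j : ℤ) : ℝ)) n]
    rw [Finset.Icc_self, Finset.sum_singleton]
    push_cast
    ring
  -- Cesàro averages
  set a : ℕ → Lp ℝ 2 μ := fun N => ((N : ℝ)⁻¹) • ∑ n ∈ Finset.Icc 1 N, s n with hadef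
  have hanorm : ∀ N, ‖a N‖ ≤ Real.sqrt K := by
    intro N
    rcases Nat.eq_zero_or_pos N with h | h
    · subst h; simp [hadef, Real.sqrt_nonneg]
    · have hsum : ‖∑ n ∈ Finset.Icc 1 N, s n‖ ≤ (N : ℝ) * Real.sqrt K := by
        calc ‖∑ n ∈ Finset.Icc 1 N, s n‖ ≤ ∑ n ∈ Finset.Icc 1 N, ‖s n‖ :=
              norm_sum_le _ _
        _ ≤ ∑ n ∈ Finset.Icc 1 N, Real.sqrt K :=
              Finset.sum_le_sum (fun n _ => hsnorm n)
        _ = (N : ℝ) * Real.sqrt K := by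
              rw [Finset.sum_const, Nat.card_Icc]
              simp [nsmul_eq_mul]
      rw [hadef]
      simp only [norm_smul, norm_inv, Real.norm_natCast]
      calc ((N : ℝ))⁻¹ * ‖∑ n ∈ Finset.Icc 1 N, s n‖
          ≤ (N : ℝ)⁻¹ * ((N : ℝ) * Real.sqrt K) := by
            refine mul_le_mul_of_nonneg_left hsum (by positivity)
      _ = Real.sqrt K := by
            field_simp
  have hVa : ∀ N : ℕ, 1 ≤ N → V (a N) = ((N : ℝ)⁻¹) • (s 1 - s (N + 1)) + s 1 := by
    intro N hN
    have htel : ∑ n ∈ Finset.Icc 1 N, (s n - s (n + 1)) = s 1 - s (N + 1) := by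
      have h1 : ∑ n ∈ Finset.Icc 1 N, (s n - s (n + 1)) =
          ∑ i ∈ Finset.range N, (s (1 + i) - s (1 + i + 1)) := by
        rw [← Finset.Ico_add_one_right_eq_Icc, Finset.sum_Ico_eq_sum_range]
        simp
      rw [h1]
      have := Finset.sum_range_sub' (fun i => s (1 + i)) N
      simpa [add_comm, add_assoc, add_left_comm] using this
    have hlin : V (a N) = ((N : ℝ)⁻¹) • ∑ n ∈ Finset.Icc 1 N, V (s n) := by
      rw [hadef]
      simp only [_root_.map_smul, map_sum]
    rw [hlin]
    have hVs : ∀ n, V (s n) = (s n - s (n + 1)) + s 1 := by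
      intro n
      rw [hVapp, hUs n]
      abel
    have : ∑ n ∈ Finset.Icc 1 N, V (s n) =
        (s 1 - s (N + 1)) + (N : ℝ) • s 1 := by
      rw [Finset.sum_congr rfl (fun n _ => hVs n), Finset.sum_add_distrib, htel,
        Finset.sum_const, Nat.card_Icc]
      simp [Nat.cast_smul_eq_nsmul]
    rw [this, smul_add, smul_smul]
    have hNne : (N : ℝ) ≠ 0 := by positivity
    rw [inv_mul_cancel₀ hNne, one_smul]
  have hVtend : Tendsto (fun N => V (a N)) atTop (nhds (s 1)) := by
    rw [← tendsto_sub_nhds_zero_iff]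
    apply squeeze_zero_norm' (a := fun N : ℕ => 2 * Real.sqrt K / N)
    · filter_upwards [eventually_ge_atTop 1] with N hN
      have hdiff : V (a N) - s 1 = ((N : ℝ)⁻¹) • (s 1 - s (N + 1)) := by
        rw [hVa N hN]; abel
      rw [hdiff, norm_smul]
      simp only [norm_inv, Real.norm_natCast]
      rw [div_eq_inv_mul]
      refine mul_le_mul_of_nonneg_left ?_ (by positivity)
      calc ‖s 1 - s (N + 1)‖ ≤ ‖s 1‖ + ‖s (N + 1)‖ := norm_sub_le _ _
      _ ≤ 2 * Real.sqrt K := by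
          have := hsnorm 1; have := hsnorm (N + 1); linarith
    · exact tendsto_const_div_atTop_nhds_zero_nat (2 * Real.sqrt K)
  obtain ⟨G, hG⟩ := exists_preimage_of_bounded_approx V hVcont a (Real.sqrt K) hanorm (s 1) hVtend
  -- the transfer function
  set φ : (ℤ → ℤ) → ℝ := ⇑G with hφdef
  have hφm : Measurable φ := (Lp.stronglyMeasurable G).measurable
  have hcob : (fun ω => φ ω - φ (intShift ω)) =ᵐ[μ]
      (fun ω => ((ω 1 : ℤ) : ℝ) - ρ) := by
    have h0 : ⇑(V G) =ᵐ[μ] ⇑(s 1) := by rw [hG]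
    filter_upwards [Lp.coeFn_sub G (U G), Lp.coeFn_compMeasurePreserving G hshift,
      (memS 1).coeFn_toLp, h0] with ω h1 h2 h3 h4
    have hVG : (V G : (ℤ → ℤ) → ℝ) ω = φ ω - φ (intShift ω) := by
      rw [hVapp]
      rw [show ⇑(G - U G) ω = (⇑G - ⇑(U G)) ω from by rw [h1]]
      simp only [Pi.sub_apply]
      rw [hUapp, h2]
      rfl
    rw [← hVG, h4, h3]
    show Sfun 1 ω = _
    simp [hSfun]
  -- iterate the coboundary equation
  have hcobn : ∀ n : ℕ, ∀ᵐ ω ∂μ, ∃ m : ℤ,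
      φ ω - φ (intShift^[n] ω) = (m : ℝ) - n * ρ := by
    intro n
    induction n with
    | zero => filter_upwards with ω; exact ⟨0, by simp⟩
    | succ n ih =>
        have hpull := (hshift.iterate n).quasiMeasurePreserving.ae_eq_comp hcob
        filter_upwards [ih, hpull] with ω hm hstep
        obtain ⟨m, hm⟩ := hm
        refine ⟨m + (intShift^[n] ω) 1, ?_⟩
        have hstep' : φ (intShift^[n] ω) - φ (intShift (intShift^[n] ω)) =
            (((intShift^[n] ω) 1 : ℤ) : ℝ) - ρ := hstep
        rw [Function.iterate_succ_apply']
        push_cast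
        push_cast at hm hstep'
        linarith
  -- the two bounded observables
  set F1 : (ℤ → ℤ) → ℝ := fun ω => Real.cos (2 * Real.pi * φ ω) with hF1def
  set F2 : (ℤ → ℤ) → ℝ := fun ω => Real.sin (2 * Real.pi * φ ω) with hF2def
  have hF1m : Measurable F1 := (Real.measurable_cos.comp (measurable_const.mul hφm))
  have hF2m : Measurable F2 := (Real.measurable_sin.comp (measurable_const.mul hφm))
  have hF1b : ∀ ω, |F1 ω| ≤ 1 := fun ω => Real.abs_cos_le_one _
  have hF2b : ∀ ω, |F2 ω| ≤ 1 := fun ω => Real.abs_sin_le_one _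
  have hmeasiter : ∀ n : ℕ, Measurable (intShift^[n]) := fun n => (hshift.iterate n).measurable
  have hint : ∀ (F G : (ℤ → ℤ) → ℝ), Measurable F → Measurable G → (∀ ω, |F ω| ≤ 1) →
      (∀ ω, |G ω| ≤ 1) → ∀ n : ℕ, Integrable (fun ω => F ω * G (intShift^[n] ω)) μ := by
    intro F G hFm hGm hFb hGb n
    refine ⟨((hFm.mul (hGm.comp (hmeasiter n)))).aestronglyMeasurable, ?_⟩
    refine HasFiniteIntegral.of_bounded (C := 1) (Eventually.of_forall (fun ω => ?_))
    simp only [Real.norm_eq_abs, abs_mul]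
    exact mul_le_one₀ (hFb ω) (abs_nonneg _) (hGb _)
  -- compute the correlation integrals
  have hcoseq : ∀ n : ℕ,
      (∫ ω, F1 ω * F1 (intShift^[n] ω) ∂μ) + (∫ ω, F2 ω * F2 (intShift^[n] ω) ∂μ) =
        Real.cos (2 * Real.pi * (n * ρ)) := by
    intro n
    rw [← integral_add (hint F1 F1 hF1m hF1m hF1b hF1b n) (hint F2 F2 hF2m hF2m hF2b hF2b n)]
    have hae : (fun ω => F1 ω * F1 (intShift^[n] ω) + F2 ω * F2 (intShift^[n] ω)) =ᵐ[μ]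
        (fun _ => Real.cos (2 * Real.pi * (n * ρ))) := by
      filter_upwards [hcobn n] with ω hm
      obtain ⟨m, hm⟩ := hm
      have : 2 * Real.pi * φ ω - 2 * Real.pi * φ (intShift^[n] ω) =
          (m : ℝ) * (2 * Real.pi) - 2 * Real.pi * (n * ρ) := by
        linear_combination (2 * Real.pi) * hm
      rw [hF1def, hF2def]
      simp only []
      rw [← Real.cos_sub, this, Real.cos_int_mul_two_pi_sub]
    rw [integral_congr_ae hae]
    simp
  have hsineq : ∀ n : ℕ,
      (∫ ω, F2 ω * F1 (intShift^[n] ω) ∂μ) - (∫ ω, F1 ω * F2 (intShift^[n] ω) ∂μ) =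
        - Real.sin (2 * Real.pi * (n * ρ)) := by
    intro n
    rw [← integral_sub (hint F2 F1 hF2m hF1m hF2b hF1b n) (hint F1 F2 hF1m hF2m hF1b hF2b n)]
    have hae : (fun ω => F2 ω * F1 (intShift^[n] ω) - F1 ω * F2 (intShift^[n] ω)) =ᵐ[μ]
        (fun _ => - Real.sin (2 * Real.pi * (n * ρ))) := by
      filter_upwards [hcobn n] with ω hm
      obtain ⟨m, hm⟩ := hm
      have : 2 * Real.pi * φ ω - 2 * Real.pi * φ (intShift^[n] ω) =
          (m : ℝ) * (2 * Real.pi) - 2 * Real.pi * (n * ρ) := by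
        linear_combination (2 * Real.pi) * hm
      rw [hF1def, hF2def]
      simp only []
      rw [← Real.sin_sub, this, Real.sin_int_mul_two_pi_sub]
    rw [integral_congr_ae hae]
    simp
  -- apply the mixing hypothesis
  have t11 := hmix F1 F1 hF1m hF1m ⟨1, hF1b⟩ ⟨1, hF1b⟩
  have t22 := hmix F2 F2 hF2m hF2m ⟨1, hF2b⟩ ⟨1, hF2b⟩
  have t21 := hmix F2 F1 hF2m hF1m ⟨1, hF2b⟩ ⟨1, hF1b⟩
  have t12 := hmix F1 F2 hF1m hF2m ⟨1, hF1b⟩ ⟨1, hF2b⟩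
  set L : ℝ := (∫ ω, F1 ω ∂μ) * (∫ ω, F1 ω ∂μ) + (∫ ω, F2 ω ∂μ) * (∫ ω, F2 ω ∂μ) with hLdef
  have hcos : Tendsto (fun n : ℕ => Real.cos (2 * Real.pi * (n * ρ))) atTop (nhds L) := by
    have := (t11.add t22).congr (fun n => hcoseq n)
    exact this
  have hsin : Tendsto (fun n : ℕ => Real.sin (2 * Real.pi * (n * ρ))) atTop (nhds 0) := by
    have h := (t21.sub t12).congr (fun n => hsineq n)
    have h0 : (∫ ω, F2 ω ∂μ) * (∫ ω, F1 ω ∂μ) - (∫ ω, F1 ω ∂μ) * (∫ ω, F2 ω ∂μ) = 0 := by ring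
    rw [h0] at h
    have := h.neg
    simpa using this
  -- derive cos (2πρ) = 1
  have hLsq : L ^ 2 = 1 := by
    have hA : Tendsto (fun n : ℕ => Real.cos (2 * Real.pi * (n * ρ)) ^ 2 +
        Real.sin (2 * Real.pi * (n * ρ)) ^ 2) atTop (nhds (L ^ 2 + 0 ^ 2)) :=
      (hcos.pow 2).add (hsin.pow 2)
    have hB : (fun n : ℕ => Real.cos (2 * Real.pi * (n * ρ)) ^ 2 +
        Real.sin (2 * Real.pi * (n * ρ)) ^ 2) = fun _ => (1 : ℝ) := by
      funext n
      rw [Real.cos_sq_add_sin_sq]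
    rw [hB] at hA
    have := tendsto_nhds_unique hA tendsto_const_nhds
    simpa using this
  have hLne : L ≠ 0 := by
    intro h
    rw [h] at hLsq
    norm_num at hLsq
  have hcosval : Real.cos (2 * Real.pi * ρ) = 1 := by
    have hshift1 : Tendsto (fun n : ℕ => Real.cos (2 * Real.pi * ((n + 1 : ℕ) * ρ))) atTop
        (nhds L) := hcos.comp (tendsto_add_atTop_nat 1)
    have hexp : ∀ n : ℕ, Real.cos (2 * Real.pi * ((n + 1 : ℕ) * ρ)) =
        Real.cos (2 * Real.pi * (n * ρ)) * Real.cos (2 * Real.pi * ρ) -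
        Real.sin (2 * Real.pi * (n * ρ)) * Real.sin (2 * Real.pi * ρ) := by
      intro n
      rw [← Real.cos_add]
      congr 1
      push_cast
      ring
    have hshift2 : Tendsto (fun n : ℕ => Real.cos (2 * Real.pi * (n * ρ)) *
        Real.cos (2 * Real.pi * ρ) - Real.sin (2 * Real.pi * (n * ρ)) *
        Real.sin (2 * Real.pi * ρ)) atTop
        (nhds (L * Real.cos (2 * Real.pi * ρ) - 0 * Real.sin (2 * Real.pi * ρ))) :=
      ((hcos.mul_const _).sub (hsin.mul_const _))
    have heq : L = L * Real.cos (2 * Real.pi * ρ) - 0 * Real.sin (2 * Real.pi * ρ) := by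
      refine tendsto_nhds_unique ?_ hshift2
      exact (hshift1.congr (fun n => hexp n))
    have : L * Real.cos (2 * Real.pi * ρ) = L * 1 := by
      rw [mul_one]; linarith
    exact (mul_left_cancel₀ hLne this)
  obtain ⟨m, hm⟩ := (Real.cos_eq_one_iff _).1 hcosval
  refine hρZ ⟨m, ?_⟩
  have hπ : Real.pi ≠ 0 := Real.pi_ne_zero
  have : (m : ℝ) * (2 * Real.pi) = 2 * Real.pi * ρ := hm
  field_simp at this
  nlinarith [this, Real.pi_pos]
end

section
/- Let T be an invertible measure-preserving transformation and f a measurable function whose cocycle sums Fₙ = Σ_{j=0}^{n−1} f∘Tʲ are tight. Define probability measures νₗ on Ω × ℝ as the law of (ω, F_{−U}(ω)) where F_{−u}(ω) = −Σ_{j=1}^{u} f(T^{−j}ω) and U is uniform on {1,...,L} independent of ω, under the skew-product map T̃(ω, y) = (Tω, y + f(ω)). Then the total variation distance between T̃_* νₗ and νₗ is at most 2/L, and the second-coordinate marginals of νₗ are tight uniformly in L. -/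
open MeasureTheory Filter

/-- The skew product T̃(ω, y) = (Tω, y + f(ω)) on Ω × ℝ. -/
def skewProd {Ω : Type*} (T : Ω → Ω) (f : Ω → ℝ) : Ω × ℝ → Ω × ℝ :=
  fun p => (T p.1, p.2 + f p.1)

/-- The orbit-averaged measure νₗ = (1/L) Σ_{u=1}^{L} T̃ᵘ_* (μ × δ₀) on Ω × ℝ. -/
noncomputable def nuL {Ω : Type*} [MeasurableSpace Ω] (μ : Measure Ω)
    (T : Ω → Ω) (f : Ω → ℝ) (L : ℕ) : Measure (Ω × ℝ) :=
  (L : ENNReal)⁻¹ •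
    ∑ u ∈ Finset.Icc 1 L, Measure.map ((skewProd T f)^[u]) (μ.prod (Measure.dirac 0))

/-- Pointwise formula for the iterates of the skew product. -/
lemma skewProd_iterate {Ω : Type*} (T : Ω → Ω) (f : Ω → ℝ) (u : ℕ) (ω : Ω) (y : ℝ) :
    (skewProd T f)^[u] (ω, y) = (T^[u] ω, y + ∑ j ∈ Finset.range u, f (T^[j] ω)) := by
  induction u with
  | zero => simp
  | succ u ih =>
      rw [Function.iterate_succ_apply', ih, skewProd, Function.iterate_succ_apply',
        Finset.sum_range_succ, add_assoc]

lemma skewProd_measurable {Ω : Type*} [MeasurableSpace Ω] {T : Ω → Ω} {f : Ω → ℝ}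
    (hT : Measurable T) (hf : Measurable f) : Measurable (skewProd T f) :=
  (hT.comp measurable_fst).prodMk (measurable_snd.add (hf.comp measurable_fst))

/-- The cocycle map ω ↦ (Tᵘω, F_u(ω)). -/
def cocycleMap {Ω : Type*} (T : Ω → Ω) (f : Ω → ℝ) (u : ℕ) : Ω → Ω × ℝ :=
  fun ω => (T^[u] ω, ∑ j ∈ Finset.range u, f (T^[j] ω))

lemma cocycleMap_measurable {Ω : Type*} [MeasurableSpace Ω] {T : Ω → Ω} {f : Ω → ℝ}
    (hT : Measurable T) (hf : Measurable f) (u : ℕ) : Measurable (cocycleMap T f u) :=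
  (hT.iterate u).prodMk
    (Finset.measurable_sum _ fun j _ => hf.comp (hT.iterate j))

lemma skewProd_comp_cocycleMap {Ω : Type*} (T : Ω → Ω) (f : Ω → ℝ) (u : ℕ) :
    skewProd T f ∘ cocycleMap T f u = cocycleMap T f (u + 1) := by
  funext ω
  simp only [Function.comp_apply, cocycleMap, skewProd, Function.iterate_succ_apply',
    Finset.sum_range_succ]

lemma map_skewProd_iterate {Ω : Type*} [MeasurableSpace Ω] (μ : Measure Ω)
    [IsProbabilityMeasure μ] {T : Ω → Ω} {f : Ω → ℝ}
    (hT : Measurable T) (hf : Measurable f) (u : ℕ) :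
    Measure.map ((skewProd T f)^[u]) (μ.prod (Measure.dirac 0)) =
      Measure.map (cocycleMap T f u) μ := by
  rw [Measure.prod_dirac,
    Measure.map_map ((skewProd_measurable hT hf).iterate u)
      measurable_prodMk_right]
  congr 1
  funext ω
  simp [Function.comp, skewProd_iterate, cocycleMap]

/-- Key construction in the proof of Schmidt's theorem: νₗ is almost T̃-invariant, with
variational distance at most 2/L, and its second-coordinate marginals are tight uniformly
in L when the cocycle sums of f are tight. -/
theorem skew_average_almost_invariant_and_tight {Ω : Type*} [MeasurableSpace Ω]
    (μ : Measure Ω) [IsProbabilityMeasure μ]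
    (T : Ω → Ω) (hT : MeasurePreserving T μ μ)
    (S : Ω → Ω) (hS : Measurable S)
    (hST : ∀ ω, S (T ω) = ω) (hTS : ∀ ω, T (S ω) = ω)
    (f : Ω → ℝ) (hf : Measurable f)
    (htight : ∀ ε > (0 : ℝ), ∃ M > (0 : ℝ), ∀ n : ℕ,
      μ {ω | M ≤ |∑ j ∈ Finset.range n, f (T^[j] ω)|} ≤ ENNReal.ofReal ε) :
    (∀ L : ℕ, 1 ≤ L → ∀ s : Set (Ω × ℝ), MeasurableSet s →
      Measure.map (skewProd T f) (nuL μ T f L) s ≤ nuL μ T f L s + ENNReal.ofReal (2 / L) ∧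
      nuL μ T f L s ≤ Measure.map (skewProd T f) (nuL μ T f L) s + ENNReal.ofReal (2 / L)) ∧
    (∀ ε > (0 : ℝ), ∃ M > (0 : ℝ), ∀ L : ℕ, 1 ≤ L →
      Measure.map Prod.snd (nuL μ T f L) {y : ℝ | M ≤ |y|} ≤ ENNReal.ofReal ε) := by
  have hTm : Measurable T := hT.measurable
  have hskew : Measurable (skewProd T f) := skewProd_measurable hTm hf
  have hg : ∀ u, Measurable (cocycleMap T f u) := cocycleMap_measurable hTm hf
  -- general formula for `nuL` applied to a measurable set
  have hnuL : ∀ (L : ℕ) (s : Set (Ω × ℝ)), MeasurableSet s →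
      nuL μ T f L s = (L : ENNReal)⁻¹ *
        ∑ u ∈ Finset.Icc 1 L, μ (cocycleMap T f u ⁻¹' s) := by
    intro L s hs
    rw [nuL, Measure.smul_apply, Measure.finset_sum_apply, smul_eq_mul]
    congr 1
    refine Finset.sum_congr rfl fun u _ => ?_
    rw [map_skewProd_iterate μ hTm hf u, Measure.map_apply (hg u) hs]
  constructor
  · -- almost invariance
    intro L hL s hs
    set a : ℕ → ENNReal := fun u => μ (cocycleMap T f u ⁻¹' s) with ha
    have ha1 : ∀ u, a u ≤ 1 := fun u => prob_le_one
    -- the pushforward of nuL applied to s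
    have hmap : Measure.map (skewProd T f) (nuL μ T f L) s =
        (L : ENNReal)⁻¹ * ∑ u ∈ Finset.Icc 2 (L + 1), a u := by
      rw [Measure.map_apply hskew hs, hnuL L _ (hskew hs)]
      congr 1
      have : ∀ u, μ (cocycleMap T f u ⁻¹' (skewProd T f ⁻¹' s)) = a (u + 1) := by
        intro u
        rw [ha]
        congr 1
        rw [← Set.preimage_comp, skewProd_comp_cocycleMap]
      rw [← Finset.map_add_right_Icc 1 L 1, Finset.sum_map]
      exact Finset.sum_congr rfl fun u _ => this u
    have hbase : nuL μ T f L s = (L : ENNReal)⁻¹ * ∑ u ∈ Finset.Icc 1 L, a u :=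
      hnuL L s hs
    have hLpos : (0 : ℕ) < L := hL
    -- compare the two sums
    have hsplit_top : ∑ u ∈ Finset.Icc 1 (L + 1), a u
        = ∑ u ∈ Finset.Icc 1 L, a u + a (L + 1) :=
      Finset.sum_Icc_succ_top (by omega) a
    have hins : Finset.Icc 1 (L + 1) = insert 1 (Finset.Icc 2 (L + 1)) := by
      ext x; simp [Finset.mem_Icc, Finset.mem_insert]; omega
    have hsplit_bot : ∑ u ∈ Finset.Icc 1 (L + 1), a u
        = a 1 + ∑ u ∈ Finset.Icc 2 (L + 1), a u := by
      rw [hins, Finset.sum_insert (by simp)]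
    have h1 : ∑ u ∈ Finset.Icc 2 (L + 1), a u ≤ ∑ u ∈ Finset.Icc 1 L, a u + 1 := by
      calc ∑ u ∈ Finset.Icc 2 (L + 1), a u ≤ ∑ u ∈ Finset.Icc 1 (L + 1), a u :=
            Finset.sum_le_sum_of_subset (Finset.Icc_subset_Icc_left (by omega))
        _ = ∑ u ∈ Finset.Icc 1 L, a u + a (L + 1) := hsplit_top
        _ ≤ ∑ u ∈ Finset.Icc 1 L, a u + 1 := add_le_add_right (ha1 _) _
    have h2 : ∑ u ∈ Finset.Icc 1 L, a u ≤ ∑ u ∈ Finset.Icc 2 (L + 1), a u + 1 := by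
      calc ∑ u ∈ Finset.Icc 1 L, a u ≤ ∑ u ∈ Finset.Icc 1 (L + 1), a u :=
            Finset.sum_le_sum_of_subset (Finset.Icc_subset_Icc_right (by omega))
        _ = a 1 + ∑ u ∈ Finset.Icc 2 (L + 1), a u := hsplit_bot
        _ ≤ 1 + ∑ u ∈ Finset.Icc 2 (L + 1), a u := add_le_add_left (ha1 _) _
        _ = ∑ u ∈ Finset.Icc 2 (L + 1), a u + 1 := add_comm _ _
    have hinv_le : (L : ENNReal)⁻¹ ≤ ENNReal.ofReal (2 / L) := by
      rw [ENNReal.ofReal_div_of_pos (by exact_mod_cast hLpos), ENNReal.ofReal_ofNat,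
        ENNReal.ofReal_natCast, ENNReal.div_eq_inv_mul]
      calc (L : ENNReal)⁻¹ = (L : ENNReal)⁻¹ * 1 := (mul_one _).symm
        _ ≤ (L : ENNReal)⁻¹ * 2 := mul_le_mul_right one_le_two _
    constructor
    · rw [hmap, hbase]
      calc (L : ENNReal)⁻¹ * ∑ u ∈ Finset.Icc 2 (L + 1), a u
          ≤ (L : ENNReal)⁻¹ * (∑ u ∈ Finset.Icc 1 L, a u + 1) := mul_le_mul_right h1 _
        _ = (L : ENNReal)⁻¹ * ∑ u ∈ Finset.Icc 1 L, a u + (L : ENNReal)⁻¹ * 1 := by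
            rw [mul_add]
        _ ≤ (L : ENNReal)⁻¹ * ∑ u ∈ Finset.Icc 1 L, a u + ENNReal.ofReal (2 / L) := by
            rw [mul_one]; exact add_le_add_right hinv_le _
    · rw [hmap, hbase]
      calc (L : ENNReal)⁻¹ * ∑ u ∈ Finset.Icc 1 L, a u
          ≤ (L : ENNReal)⁻¹ * (∑ u ∈ Finset.Icc 2 (L + 1), a u + 1) := mul_le_mul_right h2 _
        _ = (L : ENNReal)⁻¹ * ∑ u ∈ Finset.Icc 2 (L + 1), a u + (L : ENNReal)⁻¹ * 1 := by
            rw [mul_add]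
        _ ≤ (L : ENNReal)⁻¹ * ∑ u ∈ Finset.Icc 2 (L + 1), a u + ENNReal.ofReal (2 / L) := by
            rw [mul_one]; exact add_le_add_right hinv_le _
  · -- tightness of the second marginal
    intro ε hε
    obtain ⟨M, hM, hbound⟩ := htight ε hε
    refine ⟨M, hM, fun L hL => ?_⟩
    have hA : MeasurableSet {y : ℝ | M ≤ |y|} :=
      measurableSet_le measurable_const measurable_id.abs
    rw [Measure.map_apply measurable_snd hA, hnuL L _ (measurable_snd hA)]
    have hterm : ∀ u ∈ Finset.Icc 1 L,
        μ (cocycleMap T f u ⁻¹' (Prod.snd ⁻¹' {y : ℝ | M ≤ |y|})) ≤ ENNReal.ofReal ε := by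
      intro u _
      have : cocycleMap T f u ⁻¹' (Prod.snd ⁻¹' {y : ℝ | M ≤ |y|}) =
          {ω | M ≤ |∑ j ∈ Finset.range u, f (T^[j] ω)|} := rfl
      rw [this]
      exact hbound u
    calc (L : ENNReal)⁻¹ *
          ∑ u ∈ Finset.Icc 1 L, μ (cocycleMap T f u ⁻¹' (Prod.snd ⁻¹' {y : ℝ | M ≤ |y|}))
        ≤ (L : ENNReal)⁻¹ * ∑ u ∈ Finset.Icc 1 L, ENNReal.ofReal ε :=
          mul_le_mul_right (Finset.sum_le_sum hterm) _
      _ = (L : ENNReal)⁻¹ * ((L : ENNReal) * ENNReal.ofReal ε) := by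
          rw [Finset.sum_const, Nat.card_Icc]; simp [nsmul_eq_mul]
      _ = ENNReal.ofReal ε := by
          rw [← mul_assoc, ENNReal.inv_mul_cancel (Nat.cast_ne_zero.mpr (by omega))
            (ENNReal.natCast_ne_top L), one_mul]
end
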